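/- arXiv:2502.03864 — 6 statements merged into one kernel-verified Lean document; each statement's English description precedes it below -/
import Mathlib

section
/- If G is a 2-good graph on n vertices (a graph having at least two vertices of degree 1 that are at distance at least three from each other) whose number of edges is divisible by 3, then for every edge-colouring f of the complete graph K_{n+2} with elements of Z_3 there is an embedding of G into K_{n+2} such that the sum of the colours of the images of the edges of G is 0 in Z_3. -/
open SimpleGraph Finset

set_option synthInstance.maxSize 400
set_option maxHeartbeats 1000000

private lemma zmod3_key : ∀ g1 g2 h h' R : ZMod 3, g1 ≠ g2 →
    g1 + h + R ≠ 0 → g2 + h + R ≠ 0 → g1 + h' + R ≠ 0 → g2 + h' + R ≠ 0 → h = h' := by decide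

private lemma zmod3_b : ∀ c1 c2 κ : ZMod 3, c1 ≠ κ → c2 ≠ κ → c1 ≠ c2 → c1 + c2 + κ = 0 := by
  decide

private lemma zmod3_c : ∀ g1 g2 κ μ R : ZMod 3, g1 ≠ g2 → μ ≠ κ →
    g1 + κ + R ≠ 0 → g2 + κ + R ≠ 0 → g1 + μ + R ≠ 0 → g2 + μ + R ≠ 0 → False := by decide

private lemma inj_override {V : Type} [DecidableEq V] {m : ℕ} (f : V → Fin m)
    (hf : Function.Injective f)
    (u v : V) (huv : u ≠ v) (x y : Fin m) (hxy : x ≠ y)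
    (hx : ∀ z, z ≠ u → z ≠ v → f z ≠ x) (hy : ∀ z, z ≠ u → z ≠ v → f z ≠ y) :
    Function.Injective (fun z => if z = u then x else if z = v then y else f z) := by
  intro p q h
  simp only at h
  by_cases hpu : p = u <;> by_cases hpv : p = v <;> by_cases hqu : q = u <;> by_cases hqv : q = v
  all_goals subst_vars
  all_goals simp_all
  all_goals first
    | exact hf h
    | exact (hx _ ‹_› ‹_› ‹_›).elim
    | exact (hy _ ‹_› ‹_› ‹_›).elim
    | exact (hx _ ‹_› ‹_› (Eq.symm ‹_›)).elim
    | exact (hy _ ‹_› ‹_› (Eq.symm ‹_›)).elim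
    | exact (hx _ ‹_› ‹_› rfl).elim
    | exact (hy _ ‹_› ‹_› rfl).elim

private lemma inj4 {V : Type} [Fintype V] [DecidableEq V] {m : ℕ}
    {z1 z2 z3 z4 : V} {t1 t2 t3 t4 : Fin m} (Q : Finset (Fin m))
    (h12 : z1 ≠ z2) (h13 : z1 ≠ z3) (h14 : z1 ≠ z4) (h23 : z2 ≠ z3) (h24 : z2 ≠ z4) (h34 : z3 ≠ z4)
    (g12 : t1 ≠ t2) (g13 : t1 ≠ t3) (g14 : t1 ≠ t4) (g23 : t2 ≠ t3) (g24 : t2 ≠ t4) (g34 : t3 ≠ t4)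
    (q1 : t1 ∉ Q) (q2 : t2 ∉ Q) (q3 : t3 ∉ Q) (q4 : t4 ∉ Q)
    (hcard : Fintype.card V ≤ Q.card + 4) :
    ∃ f : V → Fin m, Function.Injective f ∧ f z1 = t1 ∧ f z2 = t2 ∧ f z3 = t3 ∧ f z4 = t4 ∧
      ∀ z, z ≠ z1 → z ≠ z2 → z ≠ z3 → z ≠ z4 → f z ∈ Q := by
  classical
  set P : Finset V := {z1, z2, z3, z4} with hP
  have hPcard : P.card = 4 := by
    simp [hP, Finset.card_insert_of_notMem, h12, h13, h14, h23, h24, h34]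
  have hcard' : Fintype.card ↥(Pᶜ) ≤ Fintype.card ↥Q := by
    simp only [Fintype.card_coe, Finset.card_compl, hPcard]
    omega
  obtain ⟨e⟩ := Function.Embedding.nonempty_of_card_le hcard'
  set g : V → Fin m := fun z =>
    if z = z1 then t1 else if z = z2 then t2 else if z = z3 then t3 else if z = z4 then t4
    else if h : z ∈ Pᶜ then (e ⟨z, h⟩ : Fin m) else t1 with hg
  have hmem : ∀ z, z ≠ z1 → z ≠ z2 → z ≠ z3 → z ≠ z4 → g z ∈ Q := by
    intro z a1 a2 a3 a4
    have hz : z ∈ Pᶜ := by simp [hP, a1, a2, a3, a4]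
    simp only [hg, a1, a2, a3, a4, if_false, hz, dif_pos]
    exact (e ⟨z, hz⟩).2
  have hv1 : g z1 = t1 := by simp [hg]
  have hv2 : g z2 = t2 := by simp [hg, h12.symm]
  have hv3 : g z3 = t3 := by simp [hg, h13.symm, h23.symm]
  have hv4 : g z4 = t4 := by simp [hg, h14.symm, h24.symm, h34.symm]
  refine ⟨g, ?_, hv1, hv2, hv3, hv4, hmem⟩
  intro p q h
  by_cases hp1 : p = z1
  · rw [hp1, hv1] at h
    by_cases hq1 : q = z1
    · exact hp1.trans hq1.symm
    by_cases hq2 : q = z2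
    · rw [hq2, hv2] at h; exact absurd h g12
    by_cases hq3 : q = z3
    · rw [hq3, hv3] at h; exact absurd h g13
    by_cases hq4 : q = z4
    · rw [hq4, hv4] at h; exact absurd h g14
    have hQ := hmem q hq1 hq2 hq3 hq4
    rw [← h] at hQ; exact absurd hQ q1
  by_cases hp2 : p = z2
  · rw [hp2, hv2] at h
    by_cases hq1 : q = z1
    · rw [hq1, hv1] at h; exact absurd h.symm g12
    by_cases hq2 : q = z2
    · exact hp2.trans hq2.symm
    by_cases hq3 : q = z3
    · rw [hq3, hv3] at h; exact absurd h g23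
    by_cases hq4 : q = z4
    · rw [hq4, hv4] at h; exact absurd h g24
    have hQ := hmem q hq1 hq2 hq3 hq4
    rw [← h] at hQ; exact absurd hQ q2
  by_cases hp3 : p = z3
  · rw [hp3, hv3] at h
    by_cases hq1 : q = z1
    · rw [hq1, hv1] at h; exact absurd h.symm g13
    by_cases hq2 : q = z2
    · rw [hq2, hv2] at h; exact absurd h.symm g23
    by_cases hq3 : q = z3
    · exact hp3.trans hq3.symm
    by_cases hq4 : q = z4
    · rw [hq4, hv4] at h; exact absurd h g34
    have hQ := hmem q hq1 hq2 hq3 hq4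
    rw [← h] at hQ; exact absurd hQ q3
  by_cases hp4 : p = z4
  · rw [hp4, hv4] at h
    by_cases hq1 : q = z1
    · rw [hq1, hv1] at h; exact absurd h.symm g14
    by_cases hq2 : q = z2
    · rw [hq2, hv2] at h; exact absurd h.symm g24
    by_cases hq3 : q = z3
    · rw [hq3, hv3] at h; exact absurd h.symm g34
    by_cases hq4 : q = z4
    · exact hp4.trans hq4.symm
    have hQ := hmem q hq1 hq2 hq3 hq4
    rw [← h] at hQ; exact absurd hQ q4
  by_cases hq1 : q = z1
  · have hQ := hmem p hp1 hp2 hp3 hp4; rw [h, hq1, hv1] at hQ; exact absurd hQ q1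
  by_cases hq2 : q = z2
  · have hQ := hmem p hp1 hp2 hp3 hp4; rw [h, hq2, hv2] at hQ; exact absurd hQ q2
  by_cases hq3 : q = z3
  · have hQ := hmem p hp1 hp2 hp3 hp4; rw [h, hq3, hv3] at hQ; exact absurd hQ q3
  by_cases hq4 : q = z4
  · have hQ := hmem p hp1 hp2 hp3 hp4; rw [h, hq4, hv4] at hQ; exact absurd hQ q4
  have hp : p ∈ Pᶜ := by simp [hP, hp1, hp2, hp3, hp4]
  have hq : q ∈ Pᶜ := by simp [hP, hq1, hq2, hq3, hq4]
  simp only [hg, if_neg hp1, if_neg hp2, if_neg hp3, if_neg hp4,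
    if_neg hq1, if_neg hq2, if_neg hq3, if_neg hq4, dif_pos hp, dif_pos hq] at h
  exact congrArg Subtype.val (e.injective (Subtype.coe_injective h))

private lemma edge_eq_of_deg_one {V : Type} [Fintype V] [DecidableEq V]
    (G : SimpleGraph V) [DecidableRel G.Adj] {u u' : V}
    (h1 : G.degree u = 1) (h2 : G.Adj u u') :
    ∀ e ∈ G.edgeFinset, u ∈ e → e = s(u, u') := by
  have hnb : G.neighborFinset u = {u'} := by
    obtain ⟨a, ha⟩ := Finset.card_eq_one.mp (by rw [← h1]; rfl)
    have : u' ∈ G.neighborFinset u := by simpa using h2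
    rw [ha] at this ⊢
    simp at this
    rw [this]
  intro e he hue
  induction e with
  | _ p q =>
    rw [SimpleGraph.mem_edgeFinset, SimpleGraph.mem_edgeSet] at he
    rcases Sym2.mem_iff.mp hue with h | h
    · subst h
      have : q ∈ G.neighborFinset u := by simpa using he
      rw [hnb] at this
      simp at this
      rw [this]
    · subst h
      have : p ∈ G.neighborFinset u := by simpa using he.symm
      rw [hnb] at this
      simp at this
      rw [this, Sym2.eq_swap]

private lemma map_eq_off {V : Type} {m : ℕ} {u v : V} {f f' : V → Fin m}
    (hf : ∀ z, z ≠ u → z ≠ v → f z = f' z) {e : Sym2 V} (hu : u ∉ e) (hv : v ∉ e) :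
    e.map f = e.map f' := by
  induction e with
  | _ p q =>
    rw [Sym2.map_pair_eq, Sym2.map_pair_eq]
    rw [Sym2.mem_iff] at hu hv
    push_neg at hu hv
    rw [hf p (Ne.symm hu.1) (Ne.symm hv.1), hf q (Ne.symm hu.2) (Ne.symm hv.2)]

private lemma sum_split2 {V : Type} [Fintype V] [DecidableEq V]
    (G : SimpleGraph V) [DecidableRel G.Adj] {m : ℕ} (c : Sym2 (Fin m) → ZMod 3)
    {u v u' v' : V} (huu' : G.Adj u u') (hvv' : G.Adj v v')
    (hne : s(u, u') ≠ s(v, v')) (f : V → Fin m) :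
    ∑ e ∈ G.edgeFinset, c (e.map f) =
      c s(f u, f u') + c s(f v, f v') +
        ∑ e ∈ (G.edgeFinset.erase s(u, u')).erase s(v, v'), c (e.map f) := by
  have h1 : s(u, u') ∈ G.edgeFinset := by simpa using huu'
  have h2 : s(v, v') ∈ G.edgeFinset.erase s(u, u') :=
    Finset.mem_erase.mpr ⟨hne.symm, by simpa using hvv'⟩
  rw [← Finset.add_sum_erase _ _ h1, ← Finset.add_sum_erase _ _ h2]
  rw [Sym2.map_pair_eq, Sym2.map_pair_eq]
  ring

private lemma sum_split1 {V : Type} [Fintype V] [DecidableEq V]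
    (G : SimpleGraph V) [DecidableRel G.Adj] {m : ℕ} (c : Sym2 (Fin m) → ZMod 3)
    {u u' : V} (huu' : G.Adj u u') (f : V → Fin m) :
    ∑ e ∈ G.edgeFinset, c (e.map f) =
      c s(f u, f u') + ∑ e ∈ G.edgeFinset.erase s(u, u'), c (e.map f) := by
  have h1 : s(u, u') ∈ G.edgeFinset := by simpa using huu'
  rw [← Finset.add_sum_erase _ _ h1, Sym2.map_pair_eq]

theorem stmt_0 {V : Type} [Fintype V] [DecidableEq V] {n : ℕ}
    (hV : Fintype.card V = n)
    (G : SimpleGraph V) [DecidableRel G.Adj]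
    (h2good : ∃ u v : V, G.degree u = 1 ∧ G.degree v = 1 ∧ 3 ≤ G.dist u v)
    (he : 3 ∣ G.edgeFinset.card)
    (c : Sym2 (Fin (n + 2)) → ZMod 3) :
    ∃ f : V ↪ Fin (n + 2), ∑ e ∈ G.edgeFinset, c (e.map f) = 0 := by
  by_contra hcon
  push_neg at hcon
  have Hne : ∀ f : V → Fin (n + 2), Function.Injective f →
      (∑ e ∈ G.edgeFinset, c (e.map f)) ≠ 0 := by
    intro f hf
    simpa using hcon ⟨f, hf⟩
  obtain ⟨u, v, hdu, hdv, hdist⟩ := h2good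
  obtain ⟨u', hu'⟩ : ∃ u', G.Adj u u' := by
    rw [← SimpleGraph.degree_pos_iff_exists_adj]; omega
  obtain ⟨v', hv'⟩ : ∃ v', G.Adj v v' := by
    rw [← SimpleGraph.degree_pos_iff_exists_adj]; omega
  have hne_uv : u ≠ v := by
    intro h; rw [h, SimpleGraph.dist_self] at hdist; omega
  have hnadj : ¬ G.Adj u v := by
    intro h
    have := G.dist_le (SimpleGraph.Walk.cons h SimpleGraph.Walk.nil)
    simp at this; omega
  have huu'ne : u ≠ u' := hu'.ne
  have hvv'ne : v ≠ v' := hv'.ne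
  have huv' : u ≠ v' := by
    intro h; exact hnadj (by rw [h]; exact hv'.symm)
  have hvu' : v ≠ u' := by
    intro h; exact hnadj (by rw [← h] at hu'; exact hu')
  have hu'v' : u' ≠ v' := by
    intro h
    have hadj2 : G.Adj u' v := by rw [h]; exact hv'.symm
    have := G.dist_le (SimpleGraph.Walk.cons hu' (SimpleGraph.Walk.cons hadj2 SimpleGraph.Walk.nil))
    simp at this; omega
  have hSne : s(u, u') ≠ s(v, v') := by
    intro hS
    rw [Sym2.eq_iff] at hS
    rcases hS with ⟨h1, h2⟩ | ⟨h1, h2⟩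
    · exact hne_uv h1
    · exact huv' h1
  have h4 : 4 ≤ n := by
    have hc4 : ({u, v, u', v'} : Finset V).card = 4 := by
      rw [Finset.card_insert_of_notMem (by simp [hne_uv, huu'ne, huv']),
        Finset.card_insert_of_notMem (by simp [hvu', hvv'ne]),
        Finset.card_insert_of_notMem (by simp [hu'v']), Finset.card_singleton]
    have := Finset.card_le_univ ({u, v, u', v'} : Finset V)
    rw [hc4, hV] at this
    exact this
  have hEdge_u := edge_eq_of_deg_one G hdu hu'
  have hEdge_v := edge_eq_of_deg_one G hdv hv'
  have hE3 : ((G.edgeFinset.card : ℕ) : ZMod 3) = 0 :=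
    (ZMod.natCast_eq_zero_iff _ _).mpr he
  -- Phase 0 : if the colouring is essentially constant we are done
  by_cases hC : ∃ a y1 y2 : Fin (n + 2), y1 ≠ a ∧ y2 ≠ a ∧ c s(y1, a) ≠ c s(y2, a)
  swap
  · push_neg at hC
    have hconst : ∀ p q r s : Fin (n + 2), p ≠ q → r ≠ s → c s(p, q) = c s(r, s) := by
      intro p q r s hpq hrs
      by_cases hqs : q = s
      · subst hqs; exact hC q p r hpq hrs
      · have h1 : c s(p, q) = c s(s, q) := hC q p s hpq (Ne.symm hqs)
        have h2 : c s(q, s) = c s(r, s) := hC s q r hqs hrs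
        rw [h1, Sym2.eq_swap, h2]
    obtain ⟨f0⟩ : Nonempty (V ↪ Fin (n + 2)) :=
      Function.Embedding.nonempty_of_card_le (by simp [hV])
    apply hcon f0
    have hall : ∀ e ∈ G.edgeFinset, c (e.map ⇑f0) = c s(f0 u, f0 u') := by
      intro e he'
      induction e with
      | _ p q =>
        rw [SimpleGraph.mem_edgeFinset, SimpleGraph.mem_edgeSet] at he'
        rw [Sym2.map_pair_eq]
        exact hconst _ _ _ _ (fun h => he'.ne (f0.injective h)) (fun h => hu'.ne (f0.injective h))
    rw [Finset.sum_congr rfl hall, Finset.sum_const, nsmul_eq_mul, hE3, zero_mul]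
  obtain ⟨a, x1, x2, hx1a, hx2a, hg12⟩ := hC
  have hx12 : x1 ≠ x2 := by intro h; rw [h] at hg12; exact hg12 rfl
  -- the set R of edges not touching u or v
  set R : Finset (Sym2 V) := (G.edgeFinset.erase s(u, u')).erase s(v, v') with hRdef
  have hRnot : ∀ e ∈ R, u ∉ e ∧ v ∉ e := by
    intro e heR
    obtain ⟨hev, he1⟩ := Finset.mem_erase.mp heR
    obtain ⟨heu, heE⟩ := Finset.mem_erase.mp he1
    exact ⟨fun hmem => heu (hEdge_u e heE hmem), fun hmem => hev (hEdge_v e heE hmem)⟩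
  -- Phase 1 : for every other vertex b, colours from b to the rest are constant
  have P2 : ∀ b w w' : Fin (n + 2), b ≠ a → b ≠ x1 → b ≠ x2 →
      w ≠ a → w ≠ b → w ≠ x1 → w ≠ x2 → w' ≠ a → w' ≠ b → w' ≠ x1 → w' ≠ x2 →
      c s(w, b) = c s(w', b) := by
    intro b w w' hba hbx1 hbx2 hwa hwb hwx1 hwx2 hw'a hw'b hw'x1 hw'x2
    by_cases hww' : w = w'
    · rw [hww']
    have hQcard : (univ \ ({a, b, x1, x2, w, w'} : Finset (Fin (n + 2)))).card = n + 2 - 6 := by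
      rw [Finset.card_sdiff_of_subset (Finset.subset_univ _), Finset.card_univ, Fintype.card_fin]
      congr 1
      rw [Finset.card_insert_of_notMem (by simp [hba.symm, hx1a.symm, hx2a.symm, hwa.symm, hw'a.symm]),
        Finset.card_insert_of_notMem (by simp [hbx1, hbx2, hwb.symm, hw'b.symm]),
        Finset.card_insert_of_notMem (by simp [hx12, hwx1.symm, hw'x1.symm]),
        Finset.card_insert_of_notMem (by simp [hwx2.symm, hw'x2.symm]),
        Finset.card_insert_of_notMem (by simp [hww']), Finset.card_singleton]
    obtain ⟨f1, hf1inj, hf1u, hf1v, hf1u', hf1v', hf1rest⟩ :=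
      inj4 (z1 := u) (z2 := v) (z3 := u') (z4 := v')
        (t1 := w) (t2 := w') (t3 := a) (t4 := b)
        (univ \ ({a, b, x1, x2, w, w'} : Finset (Fin (n + 2))))
        hne_uv huu'ne huv' hvu' hvv'ne hu'v'
        hww' hwa hwb hw'a hw'b (Ne.symm hba)
        (by simp) (by simp) (by simp) (by simp)
        (by rw [hQcard, hV]; omega)
    set F : Fin (n + 2) → Fin (n + 2) → V → Fin (n + 2) :=
      fun x y z => if z = u then x else if z = v then y else f1 z with hF
    have hFoff : ∀ x y z, z ≠ u → z ≠ v → F x y z = f1 z := by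
      intro x y z hzu hzv; simp only [hF, if_neg hzu, if_neg hzv]
    have hf1off : ∀ z, z ≠ u → z ≠ v → (f1 z = a ∨ f1 z = b ∨
        f1 z ∈ univ \ ({a, b, x1, x2, w, w'} : Finset (Fin (n + 2)))) := by
      intro z hzu hzv
      by_cases hz1 : z = u'
      · left; rw [hz1, hf1u']
      by_cases hz2 : z = v'
      · right; left; rw [hz2, hf1v']
      · right; right; exact hf1rest z hzu hzv hz1 hz2
    have hFinj : ∀ x y : Fin (n + 2), (x = x1 ∨ x = x2) → (y = w ∨ y = w') →
        Function.Injective (F x y) := by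
      intro x y hx hy
      have hxy : x ≠ y := by
        rcases hx with h | h <;> rcases hy with h' | h' <;> subst h <;> subst h'
        · exact Ne.symm hwx1
        · exact Ne.symm hw'x1
        · exact Ne.symm hwx2
        · exact Ne.symm hw'x2
      apply inj_override f1 hf1inj u v hne_uv x y hxy
      · intro z hzu hzv heq
        rcases hf1off z hzu hzv with h | h | h
        · rcases hx with h' | h' <;> subst h' <;> rw [heq] at h
          · exact hx1a h
          · exact hx2a h
        · rcases hx with h' | h' <;> subst h' <;> rw [heq] at h
          · exact hbx1 h.symm
          · exact hbx2 h.symm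
        · rw [heq] at h; rcases hx with h' | h' <;> subst h' <;> revert h <;> simp
      · intro z hzu hzv heq
        rcases hf1off z hzu hzv with h | h | h
        · rcases hy with h' | h' <;> subst h' <;> rw [heq] at h
          · exact hwa h
          · exact hw'a h
        · rcases hy with h' | h' <;> subst h' <;> rw [heq] at h
          · exact hwb h
          · exact hw'b h
        · rw [heq] at h; rcases hy with h' | h' <;> subst h' <;> revert h <;> simp
    have hsum : ∀ x y : Fin (n + 2), (x = x1 ∨ x = x2) → (y = w ∨ y = w') →
        ∑ e ∈ G.edgeFinset, c (e.map (F x y)) =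
          c s(x, a) + c s(y, b) + ∑ e ∈ R, c (e.map f1) := by
      intro x y hx hy
      rw [sum_split2 G c hu' hv' hSne (F x y)]
      have e1 : F x y u = x := by simp [hF]
      have e2 : F x y v = y := by simp [hF, hne_uv.symm]
      have e3 : F x y u' = a := by rw [hFoff x y u' (Ne.symm huu'ne) (Ne.symm hvu'), hf1u']
      have e4 : F x y v' = b := by rw [hFoff x y v' (Ne.symm huv') (Ne.symm hvv'ne), hf1v']
      rw [e1, e2, e3, e4, ← hRdef]
      congr 1
      apply Finset.sum_congr rfl
      intro e heR
      congr 1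
      exact map_eq_off (fun z hzu hzv => hFoff x y z hzu hzv) (hRnot e heR).1 (hRnot e heR).2
    exact zmod3_key (c s(x1, a)) (c s(x2, a)) (c s(w, b)) (c s(w', b))
      (∑ e ∈ R, c (e.map f1)) hg12
      (by rw [← hsum x1 w (Or.inl rfl) (Or.inl rfl)]; exact Hne _ (hFinj _ _ (Or.inl rfl) (Or.inl rfl)))
      (by rw [← hsum x2 w (Or.inr rfl) (Or.inl rfl)]; exact Hne _ (hFinj _ _ (Or.inr rfl) (Or.inl rfl)))
      (by rw [← hsum x1 w' (Or.inl rfl) (Or.inr rfl)]; exact Hne _ (hFinj _ _ (Or.inl rfl) (Or.inr rfl)))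
      (by rw [← hsum x2 w' (Or.inr rfl) (Or.inr rfl)]; exact Hne _ (hFinj _ _ (Or.inr rfl) (Or.inr rfl)))
  -- Phase 2 : pick two reference vertices and the constant colour κ
  have hZ3 : ({a, x1, x2} : Finset (Fin (n + 2))).card = 3 := by
    rw [Finset.card_insert_of_notMem (by simp [hx1a.symm, hx2a.symm]),
      Finset.card_insert_of_notMem (by simp [hx12]), Finset.card_singleton]
  have hWcard : (univ \ ({a, x1, x2} : Finset (Fin (n + 2)))).card = n - 1 := by
    rw [Finset.card_sdiff_of_subset (Finset.subset_univ _), Finset.card_univ, Fintype.card_fin, hZ3]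
    omega
  obtain ⟨b1, hb1, b2, hb2, hb12⟩ :=
    Finset.one_lt_card.mp (show 1 < (univ \ ({a, x1, x2} : Finset (Fin (n + 2)))).card by
      rw [hWcard]; omega)
  simp only [Finset.mem_sdiff, Finset.mem_univ, true_and, Finset.mem_insert,
    Finset.mem_singleton, not_or] at hb1 hb2
  obtain ⟨hb1a, hb1x1, hb1x2⟩ := hb1
  obtain ⟨hb2a, hb2x1, hb2x2⟩ := hb2
  set κ : ZMod 3 := c s(b1, b2) with hκ
  have Wc : ∀ p q : Fin (n + 2), p ≠ a → p ≠ x1 → p ≠ x2 → q ≠ a → q ≠ x1 → q ≠ x2 →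
      p ≠ q → c s(p, q) = κ := by
    intro p q hpa hpx1 hpx2 hqa hqx1 hqx2 hpq
    by_cases hqb1 : q = b1
    · subst hqb1
      have h1 : c s(p, q) = c s(b2, q) :=
        P2 q p b2 hqa hqx1 hqx2 hpa hpq hpx1 hpx2 hb2a (Ne.symm hb12) hb2x1 hb2x2
      rw [h1, Sym2.eq_swap, hκ]
    · have h1 : c s(p, q) = c s(b1, q) :=
        P2 q p b1 hqa hqx1 hqx2 hpa hpq hpx1 hpx2 hb1a (Ne.symm hqb1) hb1x1 hb1x2
      have h2 : c s(q, b1) = c s(b2, b1) :=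
        P2 b1 q b2 hb1a hb1x1 hb1x2 hqa hqb1 hqx1 hqx2 hb2a (Ne.symm hb12) hb2x1 hb2x2
      rw [h1, Sym2.eq_swap, h2, Sym2.eq_swap, hκ]
  -- Phase 3 case (a) : some cross edge has colour κ
  by_cases hA : ∃ z p : Fin (n + 2), (z = a ∨ z = x1 ∨ z = x2) ∧
      p ≠ a ∧ p ≠ x1 ∧ p ≠ x2 ∧ c s(z, p) = κ
  · obtain ⟨z, p, hz, hpa, hpx1, hpx2, hzp⟩ := hA
    have hZ4 : ({a, x1, x2, p} : Finset (Fin (n + 2))).card = 4 := by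
      rw [Finset.card_insert_of_notMem (by simp [hx1a.symm, hx2a.symm, hpa.symm]),
        Finset.card_insert_of_notMem (by simp [hx12, hpx1.symm]),
        Finset.card_insert_of_notMem (by simp [hpx2.symm]), Finset.card_singleton]
    obtain ⟨q3, hq3, q4, hq4, hq34⟩ :=
      Finset.one_lt_card.mp (show 1 < (univ \ ({a, x1, x2, p} : Finset (Fin (n + 2)))).card by
        rw [Finset.card_sdiff_of_subset (Finset.subset_univ _), Finset.card_univ, Fintype.card_fin, hZ4]
        omega)
    simp only [Finset.mem_sdiff, Finset.mem_univ, true_and, Finset.mem_insert,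
      Finset.mem_singleton, not_or] at hq3 hq4
    obtain ⟨hq3a, hq3x1, hq3x2, hq3p⟩ := hq3
    obtain ⟨hq4a, hq4x1, hq4x2, hq4p⟩ := hq4
    have hQcard : (univ \ ({a, x1, x2, p, q3, q4} : Finset (Fin (n + 2)))).card = n + 2 - 6 := by
      rw [Finset.card_sdiff_of_subset (Finset.subset_univ _), Finset.card_univ, Fintype.card_fin]
      congr 1
      rw [Finset.card_insert_of_notMem (by simp [hx1a.symm, hx2a.symm, hpa.symm, Ne.symm hq3a, Ne.symm hq4a]),
        Finset.card_insert_of_notMem (by simp [hx12, hpx1.symm, Ne.symm hq3x1, Ne.symm hq4x1]),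
        Finset.card_insert_of_notMem (by simp [hpx2.symm, Ne.symm hq3x2, Ne.symm hq4x2]),
        Finset.card_insert_of_notMem (by simp [Ne.symm hq3p, Ne.symm hq4p]),
        Finset.card_insert_of_notMem (by simp [hq34]), Finset.card_singleton]
    have hzp' : z ≠ p := by
      rcases hz with h | h | h <;> subst h
      · exact Ne.symm hpa
      · exact Ne.symm hpx1
      · exact Ne.symm hpx2
    have hzq3 : z ≠ q3 := by
      rcases hz with h | h | h <;> subst h
      · exact Ne.symm hq3a
      · exact Ne.symm hq3x1
      · exact Ne.symm hq3x2
    have hzq4 : z ≠ q4 := by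
      rcases hz with h | h | h <;> subst h
      · exact Ne.symm hq4a
      · exact Ne.symm hq4x1
      · exact Ne.symm hq4x2
    obtain ⟨f, hfinj, hfu, hfu', hfv, hfv', hfrest⟩ :=
      inj4 (z1 := u) (z2 := u') (z3 := v) (z4 := v')
        (t1 := z) (t2 := p) (t3 := q3) (t4 := q4)
        (univ \ ({a, x1, x2, p, q3, q4} : Finset (Fin (n + 2))))
        huu'ne hne_uv huv' (Ne.symm hvu') hu'v' hvv'ne
        hzp' hzq3 hzq4 (Ne.symm hq3p) (Ne.symm hq4p) hq34
        (by simp only [Finset.mem_sdiff, Finset.mem_univ, true_and, not_not]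
            rcases hz with h | h | h <;> simp [h])
        (by simp) (by simp) (by simp)
        (by rw [hQcard, hV]; omega)
    have himg : ∀ x : V, x ≠ u → f x ≠ a ∧ f x ≠ x1 ∧ f x ≠ x2 := by
      intro x hxu
      by_cases h1 : x = u'
      · rw [h1, hfu']; exact ⟨hpa, hpx1, hpx2⟩
      by_cases h2 : x = v
      · rw [h2, hfv]; exact ⟨hq3a, hq3x1, hq3x2⟩
      by_cases h3 : x = v'
      · rw [h3, hfv']; exact ⟨hq4a, hq4x1, hq4x2⟩
      · have := hfrest x hxu h1 h2 h3
        simp only [Finset.mem_sdiff, Finset.mem_univ, true_and, Finset.mem_insert,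
          Finset.mem_singleton, not_or] at this
        exact ⟨this.1, this.2.1, this.2.2.1⟩
    have hconst : ∀ e ∈ G.edgeFinset.erase s(u, u'), c (e.map f) = κ := by
      intro e he'
      obtain ⟨hene, heE⟩ := Finset.mem_erase.mp he'
      have hue : u ∉ e := fun hmem => hene (hEdge_u e heE hmem)
      induction e with
      | _ p' q' =>
        rw [SimpleGraph.mem_edgeFinset, SimpleGraph.mem_edgeSet] at heE
        rw [Sym2.mem_iff] at hue
        push_neg at hue
        obtain ⟨hp'a, hp'x1, hp'x2⟩ := himg p' (Ne.symm hue.1)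
        obtain ⟨hq'a, hq'x1, hq'x2⟩ := himg q' (Ne.symm hue.2)
        rw [Sym2.map_pair_eq]
        exact Wc _ _ hp'a hp'x1 hp'x2 hq'a hq'x1 hq'x2 (fun h => heE.ne (hfinj h))
    have hcard1 : (((G.edgeFinset.erase s(u, u')).card : ℕ) : ZMod 3) = -1 := by
      have h1 : (G.edgeFinset.erase s(u, u')).card + 1 = G.edgeFinset.card :=
        Finset.card_erase_add_one (by simpa using hu')
      have h2 : (((G.edgeFinset.erase s(u, u')).card + 1 : ℕ) : ZMod 3) = 0 := by
        rw [h1]; exact hE3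
      push_cast at h2
      exact eq_neg_of_add_eq_zero_left h2
    refine Hne f hfinj ?_
    rw [sum_split1 G c hu' f, hfu, hfu', hzp, Finset.sum_congr rfl hconst,
      Finset.sum_const, nsmul_eq_mul, hcard1]
    ring
  -- no cross edge has colour κ
  push_neg at hA
  -- Phase 3 case (b) : two disjoint cross edges with different colours
  by_cases hB : ∃ zz1 zz2 pp1 pp2 : Fin (n + 2),
      (zz1 = a ∨ zz1 = x1 ∨ zz1 = x2) ∧ (zz2 = a ∨ zz2 = x1 ∨ zz2 = x2) ∧ zz1 ≠ zz2 ∧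
      (pp1 ≠ a ∧ pp1 ≠ x1 ∧ pp1 ≠ x2) ∧ (pp2 ≠ a ∧ pp2 ≠ x1 ∧ pp2 ≠ x2) ∧ pp1 ≠ pp2 ∧
      c s(zz1, pp1) ≠ c s(zz2, pp2)
  · obtain ⟨zz1, zz2, pp1, pp2, hz1, hz2, hzz, ⟨hp1a, hp1x1, hp1x2⟩, ⟨hp2a, hp2x1, hp2x2⟩,
      hpp, hcc⟩ := hB
    have hz1p1 : zz1 ≠ pp1 := by
      rcases hz1 with h | h | h <;> subst h
      · exact Ne.symm hp1a
      · exact Ne.symm hp1x1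
      · exact Ne.symm hp1x2
    have hz1p2 : zz1 ≠ pp2 := by
      rcases hz1 with h | h | h <;> subst h
      · exact Ne.symm hp2a
      · exact Ne.symm hp2x1
      · exact Ne.symm hp2x2
    have hz2p1 : zz2 ≠ pp1 := by
      rcases hz2 with h | h | h <;> subst h
      · exact Ne.symm hp1a
      · exact Ne.symm hp1x1
      · exact Ne.symm hp1x2
    have hz2p2 : zz2 ≠ pp2 := by
      rcases hz2 with h | h | h <;> subst h
      · exact Ne.symm hp2a
      · exact Ne.symm hp2x1
      · exact Ne.symm hp2x2
    have hQcard : (((univ \ ({a, x1, x2} : Finset (Fin (n + 2)))) \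
        ({pp1, pp2} : Finset (Fin (n + 2)))).card = n - 3) := by
      rw [Finset.card_sdiff_of_subset (by
        intro t ht
        simp only [Finset.mem_insert, Finset.mem_singleton] at ht
        simp only [Finset.mem_sdiff, Finset.mem_univ, true_and, Finset.mem_insert,
          Finset.mem_singleton, not_or]
        rcases ht with h | h <;> subst h
        · exact ⟨hp1a, hp1x1, hp1x2⟩
        · exact ⟨hp2a, hp2x1, hp2x2⟩)]
      rw [hWcard, Finset.card_insert_of_notMem (by simp [hpp]), Finset.card_singleton]
      omega
    obtain ⟨f, hfinj, hfu, hfv, hfu', hfv', hfrest⟩ :=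
      inj4 (z1 := u) (z2 := v) (z3 := u') (z4 := v')
        (t1 := zz1) (t2 := zz2) (t3 := pp1) (t4 := pp2)
        ((univ \ ({a, x1, x2} : Finset (Fin (n + 2)))) \ ({pp1, pp2} : Finset (Fin (n + 2))))
        hne_uv huu'ne huv' hvu' hvv'ne hu'v'
        hzz hz1p1 hz1p2 hz2p1 hz2p2 hpp
        (by simp only [Finset.mem_sdiff, not_and, not_not]
            intro h; exfalso
            simp only [Finset.mem_sdiff, Finset.mem_univ, true_and, Finset.mem_insert,
              Finset.mem_singleton, not_or] at h
            rcases hz1 with hh | hh | hh <;> [exact h.1 hh; exact h.2.1 hh; exact h.2.2 hh])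
        (by simp only [Finset.mem_sdiff, not_and, not_not]
            intro h; exfalso
            simp only [Finset.mem_sdiff, Finset.mem_univ, true_and, Finset.mem_insert,
              Finset.mem_singleton, not_or] at h
            rcases hz2 with hh | hh | hh <;> [exact h.1 hh; exact h.2.1 hh; exact h.2.2 hh])
        (by simp) (by simp)
        (by rw [hQcard, hV]; omega)
    have himg : ∀ x : V, x ≠ u → x ≠ v → f x ≠ a ∧ f x ≠ x1 ∧ f x ≠ x2 := by
      intro x hxu hxv
      by_cases h1 : x = u'
      · rw [h1, hfu']; exact ⟨hp1a, hp1x1, hp1x2⟩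
      by_cases h2 : x = v'
      · rw [h2, hfv']; exact ⟨hp2a, hp2x1, hp2x2⟩
      · have := hfrest x hxu hxv h1 h2
        simp only [Finset.mem_sdiff, Finset.mem_univ, true_and, Finset.mem_insert,
          Finset.mem_singleton, not_or] at this
        exact ⟨this.1.1, this.1.2.1, this.1.2.2⟩
    have hconst : ∀ e ∈ R, c (e.map f) = κ := by
      intro e he'
      have heE : e ∈ G.edgeFinset :=
        Finset.mem_of_mem_erase (Finset.mem_of_mem_erase he')
      obtain ⟨hue, hve⟩ := hRnot e he'
      induction e with
      | _ p' q' =>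
        rw [SimpleGraph.mem_edgeFinset, SimpleGraph.mem_edgeSet] at heE
        rw [Sym2.mem_iff] at hue hve
        push_neg at hue hve
        obtain ⟨hp'a, hp'x1, hp'x2⟩ := himg p' (Ne.symm hue.1) (Ne.symm hve.1)
        obtain ⟨hq'a, hq'x1, hq'x2⟩ := himg q' (Ne.symm hue.2) (Ne.symm hve.2)
        rw [Sym2.map_pair_eq]
        exact Wc _ _ hp'a hp'x1 hp'x2 hq'a hq'x1 hq'x2 (fun h => heE.ne (hfinj h))
    have hcard2 : ((R.card : ℕ) : ZMod 3) = 1 := by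
      have h1 : (G.edgeFinset.erase s(u, u')).card + 1 = G.edgeFinset.card :=
        Finset.card_erase_add_one (by simpa using hu')
      have h0 : R.card + 1 = (G.edgeFinset.erase s(u, u')).card := by
        rw [hRdef]
        exact Finset.card_erase_add_one
          (Finset.mem_erase.mpr ⟨Ne.symm hSne, by simpa using hv'⟩)
      have h2 : ((R.card + 1 + 1 : ℕ) : ZMod 3) = 0 := by
        rw [h0, h1]; exact hE3
      push_cast at h2
      have h3 : ((R.card : ℕ) : ZMod 3) = -(1 + 1) :=
        eq_neg_of_add_eq_zero_left (by rw [← add_assoc]; exact h2)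
      rw [h3]; decide
    refine Hne f hfinj ?_
    rw [sum_split2 G c hu' hv' hSne f, hfu, hfu', hfv, hfv', ← hRdef,
      Finset.sum_congr rfl hconst, Finset.sum_const, nsmul_eq_mul, hcard2, one_mul]
    exact zmod3_b _ _ _ (hA zz1 pp1 hz1 hp1a hp1x1 hp1x2) (hA zz2 pp2 hz2 hp2a hp2x1 hp2x2) hcc
  -- Phase 3 case (c) : all cross edges have the same colour μ ≠ κ
  push_neg at hB
  have hthird : ∀ pp pp' : Fin (n + 2), ∃ p'', (p'' ≠ a ∧ p'' ≠ x1 ∧ p'' ≠ x2) ∧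
      p'' ≠ pp ∧ p'' ≠ pp' := by
    intro pp pp'
    obtain ⟨p'', hp''⟩ : ∃ p'', p'' ∈ ((univ \ ({a, x1, x2} : Finset (Fin (n + 2)))) \
        ({pp, pp'} : Finset (Fin (n + 2)))) := by
      apply Finset.card_pos.mp
      have h1 := Finset.le_card_sdiff ({pp, pp'} : Finset (Fin (n + 2)))
        (univ \ ({a, x1, x2} : Finset (Fin (n + 2))))
      have h2 : ({pp, pp'} : Finset (Fin (n + 2))).card ≤ 2 :=
        le_trans (Finset.card_insert_le _ _) (by rw [Finset.card_singleton])
      rw [hWcard] at h1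
      omega
    simp only [Finset.mem_sdiff, Finset.mem_univ, true_and, Finset.mem_insert,
      Finset.mem_singleton, not_or] at hp''
    exact ⟨p'', ⟨hp''.1.1, hp''.1.2.1, hp''.1.2.2⟩, hp''.2.1, hp''.2.2⟩
  have hsame_z : ∀ z pp pp' : Fin (n + 2), (z = a ∨ z = x1 ∨ z = x2) →
      pp ≠ a → pp ≠ x1 → pp ≠ x2 → pp' ≠ a → pp' ≠ x1 → pp' ≠ x2 →
      c s(z, pp) = c s(z, pp') := by
    intro z pp pp' hz hppa hppx1 hppx2 hpp'a hpp'x1 hpp'x2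
    by_cases hp : pp = pp'
    · rw [hp]
    obtain ⟨z'', hz'', hzz''⟩ : ∃ z'', (z'' = a ∨ z'' = x1 ∨ z'' = x2) ∧ z ≠ z'' := by
      rcases hz with h | h | h <;> subst h
      · exact ⟨x1, Or.inr (Or.inl rfl), Ne.symm hx1a⟩
      · exact ⟨a, Or.inl rfl, hx1a⟩
      · exact ⟨a, Or.inl rfl, hx2a⟩
    obtain ⟨p'', ⟨hp''a, hp''x1, hp''x2⟩, hp''pp, hp''pp'⟩ := hthird pp pp'
    have e1 : c s(z, pp) = c s(z'', p'') :=
      hB z z'' pp p'' hz hz'' hzz'' ⟨hppa, hppx1, hppx2⟩ ⟨hp''a, hp''x1, hp''x2⟩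
        (Ne.symm hp''pp)
    have e2 : c s(z'', p'') = c s(z, pp') := by
      refine (hB z z'' pp' p'' hz hz'' hzz'' ⟨hpp'a, hpp'x1, hpp'x2⟩
        ⟨hp''a, hp''x1, hp''x2⟩ (Ne.symm hp''pp')).symm
    rw [e1, e2]
  have hcross : ∀ z pp z' pp' : Fin (n + 2), (z = a ∨ z = x1 ∨ z = x2) →
      pp ≠ a → pp ≠ x1 → pp ≠ x2 → (z' = a ∨ z' = x1 ∨ z' = x2) →
      pp' ≠ a → pp' ≠ x1 → pp' ≠ x2 → c s(z, pp) = c s(z', pp') := by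
    intro z pp z' pp' hz hppa hppx1 hppx2 hz' hpp'a hpp'x1 hpp'x2
    by_cases hzz' : z = z'
    · subst hzz'; exact hsame_z z pp pp' hz hppa hppx1 hppx2 hpp'a hpp'x1 hpp'x2
    by_cases hp : pp = pp'
    · subst hp
      obtain ⟨p'', ⟨hp''a, hp''x1, hp''x2⟩, hp''pp, _⟩ := hthird pp pp
      have e1 : c s(z, pp) = c s(z, p'') :=
        hsame_z z pp p'' hz hppa hppx1 hppx2 hp''a hp''x1 hp''x2
      have e2 : c s(z, p'') = c s(z', pp) :=
        hB z z' p'' pp hz hz' hzz' ⟨hp''a, hp''x1, hp''x2⟩ ⟨hppa, hppx1, hppx2⟩ hp''pp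
      rw [e1, e2]
    · exact hB z z' pp pp' hz hz' hzz' ⟨hppa, hppx1, hppx2⟩ ⟨hpp'a, hpp'x1, hpp'x2⟩ hp
  -- the common cross colour
  have hμκ : c s(a, b1) ≠ κ := hA a b1 (Or.inl rfl) hb1a hb1x1 hb1x2
  -- build the base injection
  have hQcard : (((univ \ ({a, x1, x2} : Finset (Fin (n + 2)))) \
      ({b1, b2} : Finset (Fin (n + 2)))).card = n - 3) := by
    rw [Finset.card_sdiff_of_subset (by
      intro t ht
      simp only [Finset.mem_insert, Finset.mem_singleton] at ht
      simp only [Finset.mem_sdiff, Finset.mem_univ, true_and, Finset.mem_insert,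
        Finset.mem_singleton, not_or]
      rcases ht with h | h <;> subst h
      · exact ⟨hb1a, hb1x1, hb1x2⟩
      · exact ⟨hb2a, hb2x1, hb2x2⟩)]
    rw [hWcard, Finset.card_insert_of_notMem (by simp [hb12]), Finset.card_singleton]
    omega
  obtain ⟨f1, hf1inj, hf1u, hf1v, hf1u', hf1v', hf1rest⟩ :=
    inj4 (z1 := u) (z2 := v) (z3 := u') (z4 := v')
      (t1 := x1) (t2 := b1) (t3 := a) (t4 := b2)
      ((univ \ ({a, x1, x2} : Finset (Fin (n + 2)))) \ ({b1, b2} : Finset (Fin (n + 2))))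
      hne_uv huu'ne huv' hvu' hvv'ne hu'v'
      (Ne.symm hb1x1) hx1a (Ne.symm hb2x1) hb1a hb12 (Ne.symm hb2a)
      (by simp) (by simp) (by simp) (by simp)
      (by rw [hQcard, hV]; omega)
  set F : Fin (n + 2) → Fin (n + 2) → V → Fin (n + 2) :=
    fun x y z => if z = u then x else if z = v then y else f1 z with hF
  have hFoff : ∀ x y z, z ≠ u → z ≠ v → F x y z = f1 z := by
    intro x y z hzu hzv; simp only [hF, if_neg hzu, if_neg hzv]
  have hf1off : ∀ z, z ≠ u → z ≠ v → (f1 z = a ∨ f1 z = b2 ∨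
      f1 z ∈ ((univ \ ({a, x1, x2} : Finset (Fin (n + 2)))) \
        ({b1, b2} : Finset (Fin (n + 2))))) := by
    intro z hzu hzv
    by_cases hz1 : z = u'
    · left; rw [hz1, hf1u']
    by_cases hz2 : z = v'
    · right; left; rw [hz2, hf1v']
    · right; right; exact hf1rest z hzu hzv hz1 hz2
  have hFinj : ∀ x y : Fin (n + 2), (x = x1 ∨ x = x2) → (y = b1 ∨ y = x1 ∨ y = x2) →
      x ≠ y → Function.Injective (F x y) := by
    intro x y hx hy hxy
    apply inj_override f1 hf1inj u v hne_uv x y hxy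
    · intro z hzu hzv heq
      rcases hf1off z hzu hzv with h | h | h
      · rcases hx with h' | h' <;> subst h' <;> rw [heq] at h
        · exact hx1a h
        · exact hx2a h
      · rcases hx with h' | h' <;> subst h' <;> rw [heq] at h
        · exact hb2x1 h.symm
        · exact hb2x2 h.symm
      · rw [heq] at h
        simp only [Finset.mem_sdiff, Finset.mem_univ, true_and, Finset.mem_insert,
          Finset.mem_singleton, not_or] at h
        rcases hx with h' | h' <;> subst h'
        · exact h.1.2.1 rfl
        · exact h.1.2.2 rfl
    · intro z hzu hzv heq
      rcases hf1off z hzu hzv with h | h | h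
      · rcases hy with h' | h' | h' <;> subst h' <;> rw [heq] at h
        · exact hb1a h
        · exact hx1a h
        · exact hx2a h
      · rcases hy with h' | h' | h' <;> subst h' <;> rw [heq] at h
        · exact hb12 h
        · exact hb2x1 h.symm
        · exact hb2x2 h.symm
      · rw [heq] at h
        simp only [Finset.mem_sdiff, Finset.mem_univ, true_and, Finset.mem_insert,
          Finset.mem_singleton, not_or] at h
        rcases hy with h' | h' | h' <;> subst h'
        · exact h.2.1 rfl
        · exact h.1.2.1 rfl
        · exact h.1.2.2 rfl
  have hsum : ∀ x y : Fin (n + 2),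
      ∑ e ∈ G.edgeFinset, c (e.map (F x y)) =
        c s(x, a) + c s(y, b2) + ∑ e ∈ R, c (e.map f1) := by
    intro x y
    rw [sum_split2 G c hu' hv' hSne (F x y)]
    have e1 : F x y u = x := by simp [hF]
    have e2 : F x y v = y := by simp [hF, hne_uv.symm]
    have e3 : F x y u' = a := by rw [hFoff x y u' (Ne.symm huu'ne) (Ne.symm hvu'), hf1u']
    have e4 : F x y v' = b2 := by rw [hFoff x y v' (Ne.symm huv') (Ne.symm hvv'ne), hf1v']
    rw [e1, e2, e3, e4, ← hRdef]
    congr 1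
    apply Finset.sum_congr rfl
    intro e heR
    congr 1
    exact map_eq_off (fun z hzu hzv => hFoff x y z hzu hzv) (hRnot e heR).1 (hRnot e heR).2
  have hc1 : c s(b1, b2) = κ := hκ.symm
  have hc2 : c s(x2, b2) = c s(a, b1) :=
    hcross x2 b2 a b1 (Or.inr (Or.inr rfl)) hb2a hb2x1 hb2x2 (Or.inl rfl) hb1a hb1x1 hb1x2
  have hc3 : c s(x1, b2) = c s(a, b1) :=
    hcross x1 b2 a b1 (Or.inr (Or.inl rfl)) hb2a hb2x1 hb2x2 (Or.inl rfl) hb1a hb1x1 hb1x2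
  refine zmod3_c (c s(x1, a)) (c s(x2, a)) κ (c s(a, b1)) (∑ e ∈ R, c (e.map f1))
    hg12 hμκ ?_ ?_ ?_ ?_
  · rw [← hc1, ← hsum x1 b1]
    exact Hne _ (hFinj x1 b1 (Or.inl rfl) (Or.inl rfl) (Ne.symm hb1x1))
  · rw [← hc1, ← hsum x2 b1]
    exact Hne _ (hFinj x2 b1 (Or.inr rfl) (Or.inl rfl) (Ne.symm hb1x2))
  · rw [← hc2, ← hsum x1 x2]
    exact Hne _ (hFinj x1 x2 (Or.inl rfl) (Or.inr (Or.inr rfl)) hx12)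
  · rw [← hc3, ← hsum x2 x1]
    exact Hne _ (hFinj x2 x1 (Or.inr rfl) (Or.inr (Or.inl rfl)) (Ne.symm hx12))
end

section
/- Let n ≥ 6. If T is a tree on n vertices not isomorphic to the star K_{1,n-1}, then there exist two leaves u and v of T such that the tree obtained by deleting u and v from T is not isomorphic to the star K_{1,n-3}. -/
/-!
In a star only the centre has two distinct neighbours, so `T - {u, v}` is not a star as soon as
two distinct vertices keep at least two neighbours each after the leaves `u, v` are deleted.
Call the vertices of degree at least two internal. Counting edges gives
`∑ deg x + 2 = n + #internal`, the sum over internal `x`, and a single internal vertex would be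
adjacent to everything, making `T` a star. With four or more internal vertices, any two leaves
avoid two internal vertices. With three, the degrees of the internal vertices sum to `n + 1 ≥ 7`,
so one of them, `p`, has degree at least three and hence a leaf neighbour `u`; deleting `u` and
any other leaf keeps either the other two internal vertices intact, or `p` and one of them. With
two internal vertices `p, q`, whose degrees sum to `n ≥ 6`, delete a leaf at each of them, or two
leaves at `p` when `q` has degree two.
-/

open SimpleGraph Finset

namespace SimpleGraph

variable {V W : Type*}

theorem completeBipartiteGraph_eq_starGraph (α β : Type*) [Unique α] :
    completeBipartiteGraph α β = starGraph (Sum.inl default) := by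
  ext (a | b) (a' | b') <;> simp [Unique.eq_default]

theorem nonempty_starGraph_iso_of_equiv (e : V ≃ W) (c : V) (d : W) :
    Nonempty (starGraph c ≃g starGraph d) := by
  classical
  set f := e.trans (Equiv.swap (e c) d)
  have hf : f c = d := by simp [f]
  exact ⟨⟨f, by simp [← hf, f.injective.eq_iff]⟩⟩

theorem IsAcyclic.eq_starGraph_of_isUniversal {G : SimpleGraph V} (hG : G.IsAcyclic) {c : V}
    (hc : G.IsUniversal c) : G = starGraph c := by
  classical
  ext x y
  rw [starGraph_adj]
  refine ⟨fun h => ⟨h.ne, ?_⟩, ?_⟩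
  · by_contra! hxy
    exact hG.cliqueFree le_rfl {c, x, y}
      (is3Clique_triple_iff.2 ⟨hc (Ne.symm hxy.1), hc (Ne.symm hxy.2), h⟩)
  · rintro ⟨hxy, rfl | rfl⟩
    · exact hc hxy
    · exact (hc hxy.symm).symm

theorem IsAcyclic.nonempty_iso_completeBipartiteGraph_of_isUniversal [Fintype V]
    {G : SimpleGraph V} (hG : G.IsAcyclic) {c : V} (hc : G.IsUniversal c) :
    Nonempty (G ≃g completeBipartiteGraph (Fin 1) (Fin (Fintype.card V - 1))) := by
  have hcard : Fintype.card V = Fintype.card (Fin 1 ⊕ Fin (Fintype.card V - 1)) := by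
    have := Fintype.card_pos_iff.2 ⟨c⟩
    simp only [Fintype.card_sum, Fintype.card_fin]
    omega
  rw [hG.eq_starGraph_of_isUniversal hc, completeBipartiteGraph_eq_starGraph]
  exact nonempty_starGraph_iso_of_equiv (Fintype.equivOfCardEq hcard) c _

theorem exists_eq_inl_of_adj_of_adj {α β : Type*} [Subsingleton α] {w x y : α ⊕ β}
    (hx : (completeBipartiteGraph α β).Adj w x) (hy : (completeBipartiteGraph α β).Adj w y)
    (hxy : x ≠ y) : ∃ a, w = Sum.inl a := by
  rcases w with a | b
  · exact ⟨a, rfl⟩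
  · rcases x with x | x
    · rcases y with y | y
      · exact absurd (congrArg Sum.inl (Subsingleton.elim x y)) hxy
      · simp at hy
    · simp at hx

theorem not_nonempty_iso_completeBipartiteGraph_of_ne {α β : Type*} [Subsingleton α]
    {G : SimpleGraph W} {b c : W} (hbc : b ≠ c)
    (hb : ∃ x y, x ≠ y ∧ G.Adj b x ∧ G.Adj b y) (hc : ∃ x y, x ≠ y ∧ G.Adj c x ∧ G.Adj c y) :
    ¬ Nonempty (G ≃g completeBipartiteGraph α β) := by
  rintro ⟨f⟩
  have hinl : ∀ w, (∃ x y, x ≠ y ∧ G.Adj w x ∧ G.Adj w y) → ∃ a, f w = Sum.inl a := by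
    rintro w ⟨x, y, hxy, hx, hy⟩
    exact exists_eq_inl_of_adj_of_adj (f.map_rel_iff.2 hx) (f.map_rel_iff.2 hy)
      (f.injective.ne hxy)
  obtain ⟨a, ha⟩ := hinl b hb
  obtain ⟨a', ha'⟩ := hinl c hc
  exact hbc (f.injective (by rw [ha, ha', Subsingleton.elim a a']))

theorem eq_of_adj_of_degree_eq_one {G : SimpleGraph V} {u x y : V} [Fintype (G.neighborSet u)]
    (hu : G.degree u = 1) (hx : G.Adj u x) (hy : G.Adj u y) : x = y :=
  (degree_eq_one_iff_existsUnique_adj.1 hu).unique hx hy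

theorem exists_adj_of_degree_eq_one {G : SimpleGraph V} {u : V} [Fintype (G.neighborSet u)]
    (hu : G.degree u = 1) : ∃ p, G.Adj u p :=
  (degree_eq_one_iff_existsUnique_adj.1 hu).exists

theorem not_adj_of_degree_eq_one {G : SimpleGraph V} {u p b : V} [Fintype (G.neighborSet u)]
    (hu : G.degree u = 1) (hp : G.Adj u p) (hb : b ≠ p) : ¬ G.Adj b u :=
  fun h => hb (eq_of_adj_of_degree_eq_one hu h.symm hp)

section Finite

variable [Fintype V] (G : SimpleGraph V) [DecidableRel G.Adj]

def internalVertices : Finset V := {x | 2 ≤ G.degree x}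

variable {G}

@[simp]
theorem mem_internalVertices {x : V} : x ∈ G.internalVertices ↔ 2 ≤ G.degree x := by
  simp [internalVertices]

theorem degree_eq_one_of_notMem_internalVertices {x : V} (hx : 0 < G.degree x)
    (hI : x ∉ G.internalVertices) : G.degree x = 1 := by
  rw [mem_internalVertices] at hI
  omega

theorem IsTree.sum_degree_internalVertices_add_two [Nontrivial V] (hT : G.IsTree) :
    ∑ x ∈ G.internalVertices, G.degree x + 2 = Fintype.card V + #G.internalVertices := by
  have hsum : ∑ x, G.degree x + 2 = 2 * Fintype.card V := by
    have := hT.card_edgeFinset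
    rw [sum_degrees_eq_twice_card_edges]
    omega
  have hleaves : ∑ x ∈ {x | ¬ 2 ≤ G.degree x}, G.degree x = #{x | ¬ 2 ≤ G.degree x} := by
    rw [card_eq_sum_ones]
    refine sum_congr rfl fun x hx => degree_eq_one_of_notMem_internalVertices
      (hT.connected.preconnected.degree_pos_of_nontrivial x) (by simpa using hx)
  rw [← sum_filter_add_sum_filter_not univ (2 ≤ G.degree ·), hleaves] at hsum
  have hcard := card_filter_add_card_filter_not (s := univ) (p := (2 ≤ G.degree ·))
  rw [card_univ] at hcard
  unfold internalVertices
  omega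

variable [DecidableEq V]

variable (G) in
def HasLeafPairKeepingTwoInternalVertices : Prop :=
  ∃ u v b c, u ≠ v ∧ G.degree u = 1 ∧ G.degree v = 1 ∧ b ≠ c ∧
    2 ≤ #(G.neighborFinset b \ {u, v}) ∧ 2 ≤ #(G.neighborFinset c \ {u, v})

theorem card_neighborFinset_sdiff_pair_of_degree_eq_one {u v p q b : V} (hu : G.degree u = 1)
    (hp : G.Adj u p) (hv : G.degree v = 1) (hq : G.Adj v q) (hbp : b ≠ p) (hbq : b ≠ q) :
    #(G.neighborFinset b \ {u, v}) = G.degree b := by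
  have hbu := not_adj_of_degree_eq_one hu hp hbp
  have hbv := not_adj_of_degree_eq_one hv hq hbq
  rw [← card_neighborFinset_eq_degree]
  congr 1
  ext x
  simp only [mem_sdiff, mem_neighborFinset, mem_insert, mem_singleton]
  grind

theorem degree_le_card_neighborFinset_sdiff_pair_add_one {b u v : V}
    (h : ¬ G.Adj b u ∨ ¬ G.Adj b v) : G.degree b ≤ #(G.neighborFinset b \ {u, v}) + 1 := by
  rw [← card_neighborFinset_eq_degree]
  rcases h with h | h
  · have hsdiff : G.neighborFinset b \ {u, v} = G.neighborFinset b \ {v} := by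
      ext x
      simp only [mem_sdiff, mem_neighborFinset, mem_insert, mem_singleton]
      grind
    exact hsdiff ▸ card_le_card_sdiff_add_card
  · have hsdiff : G.neighborFinset b \ {u, v} = G.neighborFinset b \ {u} := by
      ext x
      simp only [mem_sdiff, mem_neighborFinset, mem_insert, mem_singleton]
      grind
    exact hsdiff ▸ card_le_card_sdiff_add_card

theorem degree_le_card_neighborFinset_sdiff_pair_add_two (b u v : V) :
    G.degree b ≤ #(G.neighborFinset b \ {u, v}) + 2 := by
  rw [← card_neighborFinset_eq_degree]
  exact card_le_card_sdiff_add_card.trans (by grw [card_le_two])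

theorem hasLeafPairKeepingTwoInternalVertices_of_four_le_card
    (hleaf : ∃ u v, u ≠ v ∧ G.degree u = 1 ∧ G.degree v = 1)
    (hI : 4 ≤ #G.internalVertices) : G.HasLeafPairKeepingTwoInternalVertices := by
  obtain ⟨u, v, huv, hu, hv⟩ := hleaf
  obtain ⟨p, hp⟩ := exists_adj_of_degree_eq_one hu
  obtain ⟨q, hq⟩ := exists_adj_of_degree_eq_one hv
  obtain ⟨b, hb, c, hc, hbc⟩ := one_lt_card.1 (show 1 < #(G.internalVertices \ {p, q}) by
    grw [← le_card_sdiff, card_le_two]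
    omega)
  simp only [mem_sdiff, mem_internalVertices, mem_insert, mem_singleton, not_or] at hb hc
  refine ⟨u, v, b, c, huv, hu, hv, hbc, ?_, ?_⟩
  · rw [card_neighborFinset_sdiff_pair_of_degree_eq_one hu hp hv hq hb.2.1 hb.2.2]
    exact hb.1
  · rw [card_neighborFinset_sdiff_pair_of_degree_eq_one hu hp hv hq hc.2.1 hc.2.2]
    exact hc.1

theorem hasLeafPairKeepingTwoInternalVertices_of_card_eq_three (hpos : ∀ x, 0 < G.degree x)
    (hleaf : ∃ u v, u ≠ v ∧ G.degree u = 1 ∧ G.degree v = 1)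
    (hI : #G.internalVertices = 3) {p : V} (hp : 3 ≤ G.degree p) :
    G.HasLeafPairKeepingTwoInternalVertices := by
  have hpI : p ∈ G.internalVertices := mem_internalVertices.2 (by omega)
  have hIp : #(G.internalVertices.erase p) = 2 := by rw [card_erase_of_mem hpI, hI]
  obtain ⟨u, hpu, huI⟩ := exists_mem_notMem_of_card_lt_card
    (show #(G.internalVertices.erase p) < #(G.neighborFinset p) by
      rw [card_neighborFinset_eq_degree]; omega)
  rw [mem_neighborFinset] at hpu
  have hu : G.degree u = 1 := degree_eq_one_of_notMem_internalVertices (hpos u)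
    fun h => huI (mem_erase.2 ⟨hpu.ne', h⟩)
  obtain ⟨v, hvu, hv⟩ : ∃ v, v ≠ u ∧ G.degree v = 1 := by
    obtain ⟨x, y, hxy, hx, hy⟩ := hleaf
    by_cases hxu : x = u
    · exact ⟨y, hxu ▸ hxy.symm, hy⟩
    · exact ⟨x, hxu, hx⟩
  obtain ⟨q, hq⟩ := exists_adj_of_degree_eq_one hv
  by_cases hqp : q = p
  · subst hqp
    obtain ⟨b, c, hbc, hbcI⟩ := card_eq_two.1 hIp
    have hb : b ∈ G.internalVertices.erase q := by simp [hbcI]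
    have hc : c ∈ G.internalVertices.erase q := by simp [hbcI]
    rw [mem_erase, mem_internalVertices] at hb hc
    refine ⟨u, v, b, c, hvu.symm, hu, hv, hbc, ?_, ?_⟩
    · rw [card_neighborFinset_sdiff_pair_of_degree_eq_one hu hpu.symm hv hq hb.1 hb.1]
      exact hb.2
    · rw [card_neighborFinset_sdiff_pair_of_degree_eq_one hu hpu.symm hv hq hc.1 hc.1]
      exact hc.2
  · obtain ⟨c, hc⟩ := card_pos.1 (show 0 < #(G.internalVertices \ {p, q}) by
      grw [← le_card_sdiff, card_le_two]
      omega)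
    simp only [mem_sdiff, mem_internalVertices, mem_insert, mem_singleton, not_or] at hc
    refine ⟨u, v, p, c, hvu.symm, hu, hv, Ne.symm hc.2.1, ?_, ?_⟩
    · have := degree_le_card_neighborFinset_sdiff_pair_add_one (u := u)
        (Or.inr (not_adj_of_degree_eq_one hv hq (Ne.symm hqp)))
      omega
    · rw [card_neighborFinset_sdiff_pair_of_degree_eq_one hu hpu.symm hv hq hc.2.1 hc.2.2]
      exact hc.1

theorem hasLeafPairKeepingTwoInternalVertices_of_internalVertices_eq_pair
    (hpos : ∀ x, 0 < G.degree x) {p q : V} (hpq : p ≠ q) (hI : G.internalVertices = {p, q})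
    (hle : G.degree q ≤ G.degree p) (hdeg : 6 ≤ G.degree p + G.degree q) :
    G.HasLeafPairKeepingTwoInternalVertices := by
  have hleaf : ∀ x, x ≠ p → x ≠ q → G.degree x = 1 := fun x hxp hxq =>
    degree_eq_one_of_notMem_internalVertices (hpos x) (by simp [hI, hxp, hxq])
  have hq2 : 2 ≤ G.degree q := mem_internalVertices.1 (by simp [hI])
  have hNp : G.degree p - 1 ≤ #((G.neighborFinset p).erase q) := by
    rw [← card_neighborFinset_eq_degree]
    exact pred_card_le_card_erase
  by_cases hq3 : 3 ≤ G.degree q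
  · obtain ⟨u, hu⟩ := card_pos.1 (show 0 < #((G.neighborFinset p).erase q) by omega)
    obtain ⟨v, hv⟩ := card_pos.1 (show 0 < #((G.neighborFinset q).erase p) by
      grw [← pred_card_le_card_erase, card_neighborFinset_eq_degree]
      omega)
    simp only [mem_erase, mem_neighborFinset] at hu hv
    have hu1 := hleaf u hu.2.ne' hu.1
    have hv1 := hleaf v hv.1 hv.2.ne'
    have hqu := not_adj_of_degree_eq_one hu1 hu.2.symm hpq.symm
    have hpv := not_adj_of_degree_eq_one hv1 hv.2.symm hpq
    refine ⟨u, v, p, q, fun h => hqu (h ▸ hv.2), hu1, hv1, hpq, ?_, ?_⟩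
    · have := degree_le_card_neighborFinset_sdiff_pair_add_one (u := u) (Or.inr hpv)
      omega
    · have := degree_le_card_neighborFinset_sdiff_pair_add_one (v := v) (Or.inl hqu)
      omega
  · obtain ⟨u, hu, v, hv, huv⟩ := one_lt_card.1
      (show 1 < #((G.neighborFinset p).erase q) by omega)
    simp only [mem_erase, mem_neighborFinset] at hu hv
    have hu1 := hleaf u hu.2.ne' hu.1
    have hv1 := hleaf v hv.2.ne' hv.1
    refine ⟨u, v, p, q, huv, hu1, hv1, hpq, ?_, ?_⟩
    · have := degree_le_card_neighborFinset_sdiff_pair_add_two (G := G) p u v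
      omega
    · rw [card_neighborFinset_sdiff_pair_of_degree_eq_one hu1 hu.2.symm hv1 hv.2.symm
        hpq.symm hpq.symm]
      exact hq2

theorem IsTree.hasLeafPairKeepingTwoInternalVertices (hT : G.IsTree) (hn : 6 ≤ Fintype.card V)
    (hG : ∀ c, ¬ G.IsUniversal c) : G.HasLeafPairKeepingTwoInternalVertices := by
  have : Nontrivial V := Fintype.one_lt_card_iff_nontrivial.1 (by omega)
  have hpos : ∀ x, 0 < G.degree x := fun x => hT.connected.preconnected.degree_pos_of_nontrivial x
  have hsum := hT.sum_degree_internalVertices_add_two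
  have hleaf := hT.exists_ne_and_degree_eq_one
  have hI2 : 2 ≤ #G.internalVertices := by
    by_contra! h
    obtain h0 | h1 : #G.internalVertices = 0 ∨ #G.internalVertices = 1 := by omega
    · rw [card_eq_zero.1 h0, sum_empty, card_empty] at hsum
      omega
    · obtain ⟨c, hc⟩ := card_eq_one.1 h1
      rw [hc, sum_singleton, card_singleton] at hsum
      exact hG c ((G.degree_eq_card_sub_one c).1 (by omega))
  obtain h | h | h : 4 ≤ #G.internalVertices ∨ #G.internalVertices = 3 ∨
      #G.internalVertices = 2 := by omega
  · exact hasLeafPairKeepingTwoInternalVertices_of_four_le_card hleaf h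
  · obtain ⟨p, -, hp⟩ : ∃ p ∈ G.internalVertices, 2 < G.degree p :=
      exists_lt_of_sum_lt (by rw [sum_const, h, smul_eq_mul]; omega)
    exact hasLeafPairKeepingTwoInternalVertices_of_card_eq_three hpos hleaf h hp
  · obtain ⟨p, q, hpq, hI⟩ := card_eq_two.1 h
    rw [hI, sum_pair hpq, card_pair hpq] at hsum
    rcases le_total (G.degree q) (G.degree p) with hle | hle
    · exact hasLeafPairKeepingTwoInternalVertices_of_internalVertices_eq_pair hpos hpq hI hle
        (by omega)
    · exact hasLeafPairKeepingTwoInternalVertices_of_internalVertices_eq_pair hpos hpq.symm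
        (hI.trans (pair_comm p q)) hle (by omega)

theorem HasLeafPairKeepingTwoInternalVertices.exists_not_nonempty_induce_iso {α β : Type*}
    [Subsingleton α] (h : G.HasLeafPairKeepingTwoInternalVertices) :
    ∃ u v : V, u ≠ v ∧ G.degree u = 1 ∧ G.degree v = 1 ∧
      ¬ Nonempty (G.induce ({u, v}ᶜ : Set V) ≃g completeBipartiteGraph α β) := by
  obtain ⟨u, v, b, c, huv, hu, hv, hbc, hb, hc⟩ := h
  refine ⟨u, v, huv, hu, hv, ?_⟩
  have key : ∀ w, 2 ≤ #(G.neighborFinset w \ {u, v}) → ∃ hw : w ∈ ({u, v}ᶜ : Set V),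
      ∃ x y, x ≠ y ∧ (G.induce ({u, v}ᶜ : Set V)).Adj ⟨w, hw⟩ x ∧
        (G.induce ({u, v}ᶜ : Set V)).Adj ⟨w, hw⟩ y := by
    intro w hw
    have hdeg : 2 ≤ G.degree w :=
      hw.trans ((card_le_card sdiff_subset).trans_eq (card_neighborFinset_eq_degree G w))
    obtain ⟨x, hx, y, hy, hxy⟩ := one_lt_card.1 hw
    simp only [mem_sdiff, mem_neighborFinset, mem_insert, mem_singleton, not_or] at hx hy
    have hwu : w ≠ u := by rintro rfl; omega
    have hwv : w ≠ v := by rintro rfl; omega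
    exact ⟨by simp [hwu, hwv], ⟨x, by simp [hx.2]⟩, ⟨y, by simp [hy.2]⟩, by simpa using hxy,
      by simpa using hx.1, by simpa using hy.1⟩
  obtain ⟨hbs, hb'⟩ := key b hb
  obtain ⟨hcs, hc'⟩ := key c hc
  exact not_nonempty_iso_completeBipartiteGraph_of_ne (b := ⟨b, hbs⟩) (c := ⟨c, hcs⟩)
    (by simpa using hbc) hb' hc'

end Finite

end SimpleGraph

theorem stmt_5 {V : Type} [Fintype V] [DecidableEq V] {n : ℕ} (hn : 6 ≤ n)
    (hV : Fintype.card V = n)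
    (T : SimpleGraph V) [DecidableRel T.Adj]
    (hconn : T.Connected) (hacyc : T.IsAcyclic)
    (hstar : ¬ Nonempty (T ≃g completeBipartiteGraph (Fin 1) (Fin (n - 1)))) :
    ∃ u v : V, u ≠ v ∧ T.degree u = 1 ∧ T.degree v = 1 ∧
      ¬ Nonempty ((T.induce ({u, v}ᶜ : Set V)) ≃g
        completeBipartiteGraph (Fin 1) (Fin (n - 3))) := by
  subst hV
  have hnotStar : ∀ c, ¬ T.IsUniversal c := fun c hc =>
    hstar (hacyc.nonempty_iso_completeBipartiteGraph_of_isUniversal hc)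
  exact (IsTree.hasLeafPairKeepingTwoInternalVertices ⟨hconn, hacyc⟩ hn hnotStar)
    |>.exists_not_nonempty_induce_iso
end

section
/- Let n ≥ 6 and let G be a graph on n vertices with minimum degree at least n-2. If T is a tree on n vertices not isomorphic to the star K_{1,n-1}, then T embeds into G (i.e., G contains a spanning subgraph isomorphic to T). -/
/-!
The complement of `G` has maximum degree at most one. A forest `T` is bipartite, so two vertices
of the same colour class are never adjacent. Pairing up the vertices inside each class (after
first pairing a non-adjacent cross pair when both classes are odd; it exists because a complete
bipartite forest is a star) lists `V` so that the consecutive pairs are non-edges of `T`. Listing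
`W` so that every edge of `Gᶜ` is a consecutive pair, the bijection matching positions sends every
edge of `T` to an edge of `G`.
-/

open SimpleGraph Finset

section Blocks

variable {α : Type*} [DecidableEq α]

/-- Positions `2i` and `2i + 1` of a list form its `i`-th block. -/
def SameBlock (l : List α) (a b : α) : Prop := l.idxOf a / 2 = l.idxOf b / 2

lemma sameBlock_cons_cons {a b x y : α} {l : List α} (hx : x ≠ a ∧ x ≠ b) (hy : y ≠ a ∧ y ≠ b) :
    SameBlock (a :: b :: l) x y ↔ SameBlock l x y := by
  simp only [SameBlock, List.idxOf_cons_ne _ (Ne.symm hx.1), List.idxOf_cons_ne _ (Ne.symm hx.2),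
    List.idxOf_cons_ne _ (Ne.symm hy.1), List.idxOf_cons_ne _ (Ne.symm hy.2)]
  omega

lemma sameBlock_cons_cons_of_mem {a b x y : α} {l : List α} (hx : x = a ∨ x = b)
    (hy : y = a ∨ y = b) : SameBlock (a :: b :: l) x y := by
  have h : ∀ z, z = a ∨ z = b → (a :: b :: l).idxOf z / 2 = 0 := by
    rintro z (rfl | rfl)
    · simp
    · by_cases hza : z = a
      · simp [hza]
      · simp [List.idxOf_cons_ne _ (Ne.symm hza)]
  rw [SameBlock, h x hx, h y hy]

lemma List.exists_equiv_idxOf_eq {β : Type*} [Fintype α] [Fintype β] [DecidableEq β]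
    (hcard : Fintype.card α = Fintype.card β) {l : List α} {l' : List β}
    (hnd : l.Nodup) (hall : ∀ a, a ∈ l) (hnd' : l'.Nodup) (hall' : ∀ b, b ∈ l') :
    ∃ f : α ≃ β, ∀ a, l'.idxOf (f a) = l.idxOf a := by
  let e := List.Nodup.getEquivOfForallMemList l hnd hall
  let e' := List.Nodup.getEquivOfForallMemList l' hnd' hall'
  have hlen : l.length = l'.length := by
    simpa using (Fintype.card_congr e).trans (hcard.trans (Fintype.card_congr e').symm)
  refine ⟨e.symm.trans ((finCongr hlen).trans e'), fun a => ?_⟩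
  simp [e, e', hnd']

end Blocks

namespace SimpleGraph

variable {V : Type*} {G : SimpleGraph V}

lemma nonempty_starGraph_iso_completeBipartiteGraph [Fintype V] (r : V) :
    Nonempty (starGraph r ≃g completeBipartiteGraph (Fin 1) (Fin (Fintype.card V - 1))) := by
  classical
  let e : completeBipartiteGraph {v // v = r} {v // v ≠ r} ≃g starGraph r :=
    ⟨Equiv.sumCompl (· = r), by
      rintro (⟨u, rfl⟩ | ⟨u, hu⟩) (⟨v, rfl⟩ | ⟨v, hv⟩) <;>
        simp [Equiv.sumCompl_apply_inl, Equiv.sumCompl_apply_inr] <;> grind⟩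
  exact ⟨e.symm.trans <| completeBipartiteGraphCongr (Fintype.equivFinOfCardEq (by simp))
    (Fintype.equivFinOfCardEq (by simp [Fintype.card_subtype_compl]))⟩

lemma IsAcyclic.eq_starGraph_of_adj_iff (hG : G.IsAcyclic) {p : V → Prop}
    (hp : ∀ u v, G.Adj u v ↔ (p u ↔ ¬p v)) {x y : V} (hx : p x) (hy : ¬p y) :
    G = starGraph x ∨ G = starGraph y := by
  have hsingleton : (∀ z, p z → z = x) ∨ (∀ z, ¬p z → z = y) := by
    by_contra! h
    obtain ⟨⟨x', hx', hx'x⟩, ⟨y', hy', hy'y⟩⟩ := h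
    have hxy : G.Adj x y := (hp x y).2 (by tauto)
    have hyx' : G.Adj y x' := (hp y x').2 (by tauto)
    have hxy' : G.Adj x y' := (hp x y').2 (by tauto)
    have hy'x' : G.Adj y' x' := (hp y' x').2 (by tauto)
    let P : G.Path x x' := ⟨.cons hxy (.cons hyx' .nil), by simp [hxy.ne, hx'x.symm, hyx'.ne]⟩
    let Q : G.Path x x' := ⟨.cons hxy' (.cons hy'x' .nil), by simp [hxy'.ne, hx'x.symm, hy'x'.ne]⟩
    exact hy'y (congrArg (fun q : G.Path x x' => q.1.getVert 1)
      ((hG.subsingleton_path x x').elim P Q)).symm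
  rcases hsingleton with h | h
  · left
    ext u v
    rw [hp, starGraph_adj]
    grind
  · right
    ext u v
    rw [hp, starGraph_adj]
    grind

lemma IsAcyclic.exists_not_adj_across (hG : G.IsAcyclic) (hstar : ∀ r, G ≠ starGraph r)
    (C : G.Coloring (Fin 2)) {x y : V} (hx : C x = 0) (hy : C y ≠ 0) :
    ∃ a b, C a = 0 ∧ C b ≠ 0 ∧ ¬G.Adj a b := by
  by_contra! hcross
  have hp : ∀ u v, G.Adj u v ↔ (C u = 0 ↔ ¬C v = 0) := by
    intro u v
    refine ⟨fun h => by have := C.valid h; omega, fun h => ?_⟩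
    by_cases hu : C u = 0
    · exact hcross u v hu (h.1 hu)
    · exact (hcross v u (not_not.1 (mt h.2 hu)) hu).symm
  rcases hG.eq_starGraph_of_adj_iff hp hx hy with h | h <;> exact hstar _ h

variable [DecidableEq V]

lemma eq_of_compl_adj_of_le_degree [Fintype V] [DecidableRel G.Adj]
    (hdeg : ∀ w, Fintype.card V - 2 ≤ G.degree w) {a b c : V} (hb : Gᶜ.Adj a b)
    (hc : Gᶜ.Adj a c) : b = c := by
  have hle : Gᶜ.degree a ≤ 1 := by
    have := G.degree_compl a; have := hdeg a; have := G.degree_lt_card_verts a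
    omega
  exact Finset.card_le_one.1 hle b (by simpa using hb) c (by simpa using hc)

variable (G) in
def BlocksIndep (l : List V) : Prop := ∀ u ∈ l, ∀ v ∈ l, SameBlock l u v → ¬G.Adj u v

variable (G) in
def EdgesInBlocks (l : List V) : Prop := ∀ u ∈ l, ∀ v, G.Adj u v → SameBlock l u v

lemma blocksIndep_of_pairwise {l : List V} (h : ∀ u ∈ l, ∀ v ∈ l, ¬G.Adj u v) :
    G.BlocksIndep l :=
  fun u hu v hv _ => h u hu v hv

lemma BlocksIndep.append {l₁ l₂ : List V} (h₁ : G.BlocksIndep l₁) (h₂ : G.BlocksIndep l₂)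
    (hev : Even l₁.length) : G.BlocksIndep (l₁ ++ l₂) := by
  obtain ⟨k, hk⟩ := hev
  have left : ∀ x ∈ l₁, (l₁ ++ l₂).idxOf x / 2 < k := fun x hx => by
    have := List.idxOf_lt_length_of_mem hx
    rw [List.idxOf_append_of_mem hx]; omega
  have right : ∀ x ∉ l₁, (l₁ ++ l₂).idxOf x / 2 = k + l₂.idxOf x / 2 := fun x hx => by
    rw [List.idxOf_append_of_notMem hx]; omega
  intro u hu v hv huv
  unfold SameBlock at huv
  by_cases hu₁ : u ∈ l₁ <;> by_cases hv₁ : v ∈ l₁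
  · refine h₁ u hu₁ v hv₁ ?_
    rwa [List.idxOf_append_of_mem hu₁, List.idxOf_append_of_mem hv₁] at huv
  · have := left u hu₁; have := right v hv₁; omega
  · have := right u hu₁; have := left v hv₁; omega
  · refine h₂ u (List.mem_append.1 hu |>.resolve_left hu₁) v
      (List.mem_append.1 hv |>.resolve_left hv₁) ?_
    have := right u hu₁; have := right v hv₁
    unfold SameBlock; omega

lemma BlocksIndep.of_disjoint_indep {s t : Finset V} (hst : Disjoint s t)
    (hs : ∀ u ∈ s, ∀ v ∈ s, ¬G.Adj u v) (ht : ∀ u ∈ t, ∀ v ∈ t, ¬G.Adj u v) (hev : Even #s) :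
    ∃ l : List V, l.Nodup ∧ (∀ v, v ∈ l ↔ v ∈ s ∨ v ∈ t) ∧ G.BlocksIndep l :=
  ⟨s.toList ++ t.toList,
    List.nodup_append.2 ⟨s.nodup_toList, t.nodup_toList, fun a ha b hb => by
      rintro rfl; exact Finset.disjoint_left.1 hst (by simpa using ha) (by simpa using hb)⟩,
    by simp,
    (blocksIndep_of_pairwise (by simpa using hs)).append
      (blocksIndep_of_pairwise (by simpa using ht)) (by simpa using hev)⟩

lemma IsAcyclic.exists_blocksIndep [Fintype V] (hG : G.IsAcyclic) (hstar : ∀ r, G ≠ starGraph r) :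
    ∃ l : List V, l.Nodup ∧ (∀ v, v ∈ l) ∧ G.BlocksIndep l := by
  obtain ⟨C⟩ := hG.colorable_two
  set s := univ.filter (C · = 0)
  set t := univ.filter (C · ≠ 0)
  have hst : Disjoint s t := disjoint_filter_filter_not _ _ _
  have hs : ∀ u ∈ s, ∀ v ∈ s, ¬G.Adj u v := by
    simp only [s, mem_filter, mem_univ, true_and]
    exact fun u hu v hv h => C.valid h (hu.trans hv.symm)
  have ht : ∀ u ∈ t, ∀ v ∈ t, ¬G.Adj u v := by
    simp only [t, mem_filter, mem_univ, true_and]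
    exact fun u hu v hv h => C.valid h (by omega)
  suffices ∃ l : List V, l.Nodup ∧ (∀ v, v ∈ l ↔ v ∈ s ∨ v ∈ t) ∧ G.BlocksIndep l by
    obtain ⟨l, hnd, hmem, hl⟩ := this
    exact ⟨l, hnd, fun v => (hmem v).2 (by simp [s, t]; tauto), hl⟩
  rcases Nat.even_or_odd #s with hev | hodd_s
  · exact BlocksIndep.of_disjoint_indep hst hs ht hev
  rcases Nat.even_or_odd #t with hev | hodd_t
  · simpa only [or_comm] using BlocksIndep.of_disjoint_indep hst.symm ht hs hev
  obtain ⟨a, ha, b, hb, hab⟩ : ∃ a ∈ s, ∃ b ∈ t, ¬G.Adj a b := by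
    obtain ⟨x, hx⟩ := card_pos.1 hodd_s.pos
    obtain ⟨y, hy⟩ := card_pos.1 hodd_t.pos
    obtain ⟨a, b, ha, hb, hab⟩ :=
      hG.exists_not_adj_across hstar C (by simpa [s] using hx) (by simpa [t] using hy)
    exact ⟨a, by simpa [s], b, by simpa [t], hab⟩
  obtain ⟨l, hnd, hmem, hl⟩ := BlocksIndep.of_disjoint_indep (G := G)
    (hst.mono (erase_subset a s) (erase_subset b t))
    (fun u hu v hv => hs u (mem_of_mem_erase hu) v (mem_of_mem_erase hv))
    (fun u hu v hv => ht u (mem_of_mem_erase hu) v (mem_of_mem_erase hv))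
    (by rw [card_erase_of_mem ha]; exact Nat.Odd.sub_odd hodd_s odd_one)
  have hane : a ≠ b := fun h => Finset.disjoint_left.1 hst ha (h ▸ hb)
  have hal : a ∉ l := by simp [hmem, Finset.disjoint_left.1 hst ha]
  have hbl : b ∉ l := by simp [hmem, Finset.disjoint_right.1 hst hb]
  refine ⟨a :: b :: l, by simp [hane, hal, hbl, hnd], fun v => ?_, ?_⟩
  · simp only [List.mem_cons, hmem, mem_erase]
    grind
  · exact (blocksIndep_of_pairwise (l := [a, b]) (by simp [hab, G.adj_comm b a])).append hl
      (by simp)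

lemma exists_edgesInBlocks_of_adj_unique_of_closed
    (hG : ∀ a b c, G.Adj a b → G.Adj a c → b = c) (s : Finset V)
    (hclosed : ∀ a ∈ s, ∀ b, G.Adj a b → b ∈ s) :
    ∃ l : List V, l.Nodup ∧ (∀ v, v ∈ l ↔ v ∈ s) ∧ G.EdgesInBlocks l := by
  induction s using Finset.strongInduction with
  | H s ih =>
  by_cases hedge : ∃ a ∈ s, ∃ b, G.Adj a b
  swap
  · push Not at hedge
    exact ⟨s.toList, s.nodup_toList, by simp,
      fun u hu v huv => (hedge u (by simpa using hu) v huv).elim⟩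
  obtain ⟨a, ha, b, hab⟩ := hedge
  set s' := (s.erase a).erase b with hs'
  have hmem' : ∀ x, x ∈ s' ↔ x ≠ a ∧ x ≠ b ∧ x ∈ s := by
    intro x; simp only [hs', mem_erase]; tauto
  have hclosed' : ∀ x ∈ s', ∀ y, G.Adj x y → y ∈ s' := by
    intro x hx y hxy
    obtain ⟨hxa, hxb, hxs⟩ := (hmem' x).1 hx
    refine (hmem' y).2 ⟨?_, ?_, hclosed x hxs y hxy⟩
    · rintro rfl
      exact hxb (hG y x b hxy.symm hab)
    · rintro rfl
      exact hxa (hG y x a hxy.symm hab.symm)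
  have hss : s' ⊂ s := (erase_ssubset ha).trans_le' (erase_subset _ _)
  obtain ⟨l, hnd, hmem, hl⟩ := ih s' hss hclosed'
  have hal : a ∉ l := fun h => ((hmem' a).1 ((hmem a).1 h)).1 rfl
  have hbl : b ∉ l := fun h => ((hmem' b).1 ((hmem b).1 h)).2.1 rfl
  refine ⟨a :: b :: l, by simp [hab.ne, hal, hbl, hnd], fun x => ?_, ?_⟩
  · simp only [List.mem_cons, hmem, hmem']
    by_cases hxa : x = a
    · simp [hxa, ha]
    by_cases hxb : x = b
    · simp [hxb, hclosed a ha b hab]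
    simp [hxa, hxb]
  · intro u hu v huv
    rcases List.mem_cons.1 hu with rfl | hu
    · exact sameBlock_cons_cons_of_mem (.inl rfl) (.inr (hG u v b huv hab))
    rcases List.mem_cons.1 hu with rfl | hu
    · exact sameBlock_cons_cons_of_mem (.inr rfl) (.inl (hG u v a huv hab.symm))
    have hu' := (hmem' u).1 ((hmem u).1 hu)
    have hv' := (hmem' v).1 (hclosed' u ((hmem u).1 hu) v huv)
    exact (sameBlock_cons_cons ⟨hu'.1, hu'.2.1⟩ ⟨hv'.1, hv'.2.1⟩).2 (hl u hu v huv)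

lemma exists_edgesInBlocks_of_adj_unique [Fintype V]
    (hG : ∀ a b c, G.Adj a b → G.Adj a c → b = c) :
    ∃ l : List V, l.Nodup ∧ (∀ v, v ∈ l) ∧ G.EdgesInBlocks l := by
  obtain ⟨l, hnd, hmem, hl⟩ := exists_edgesInBlocks_of_adj_unique_of_closed hG univ (by simp)
  exact ⟨l, hnd, by simpa using hmem, hl⟩

end SimpleGraph

theorem stmt_6_general {V W : Type} [Fintype V] [Fintype W] {n : ℕ}
    (hV : Fintype.card V = n) (hW : Fintype.card W = n)
    (G : SimpleGraph W) [DecidableRel G.Adj]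
    (hdeg : ∀ w : W, n - 2 ≤ G.degree w)
    (T : SimpleGraph V)
    (hacyc : T.IsAcyclic)
    (hstar : ¬ Nonempty (T ≃g completeBipartiteGraph (Fin 1) (Fin (n - 1)))) :
    ∃ f : V ↪ W, ∀ u v : V, T.Adj u v → G.Adj (f u) (f v) := by
  classical
  have hT : ∀ r, T ≠ starGraph r := by
    rintro r rfl
    exact hstar (hV ▸ nonempty_starGraph_iso_completeBipartiteGraph r)
  obtain ⟨lV, hndV, hallV, hlV⟩ := hacyc.exists_blocksIndep hT
  obtain ⟨lW, hndW, hallW, hlW⟩ := Gᶜ.exists_edgesInBlocks_of_adj_unique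
    fun _ _ _ => eq_of_compl_adj_of_le_degree (hW ▸ hdeg)
  obtain ⟨f, hf⟩ := List.exists_equiv_idxOf_eq (hV.trans hW.symm) hndV hallV hndW hallW
  refine ⟨f.toEmbedding, fun u v huv => ?_⟩
  by_contra hG
  have hblock := hlW (f u) (hallW _) (f v) ((G.compl_adj _ _).2 ⟨f.injective.ne huv.ne, hG⟩)
  rw [SameBlock, hf, hf] at hblock
  exact hlV u (hallV u) v (hallV v) hblock huv

theorem stmt_6 {V W : Type} [Fintype V] [Fintype W] [DecidableEq W] {n : ℕ} (hn : 6 ≤ n)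
    (hV : Fintype.card V = n) (hW : Fintype.card W = n)
    (G : SimpleGraph W) [DecidableRel G.Adj]
    (hdeg : ∀ w : W, n - 2 ≤ G.degree w)
    (T : SimpleGraph V)
    (hconn : T.Connected) (hacyc : T.IsAcyclic)
    (hstar : ¬ Nonempty (T ≃g completeBipartiteGraph (Fin 1) (Fin (n - 1)))) :
    ∃ f : V ↪ W, ∀ u v : V, T.Adj u v → G.Adj (f u) (f v) :=
  stmt_6_general hV hW G hdeg T hacyc hstar
end

section
/- Let n ≡ 1 (mod 3), n ≥ 6, and let T be a tree on n vertices not isomorphic to K_{1,n-1} that has a vertex of degree divisible by 3. Then every restrictive edge-colouring of K_n by Z_3 (every vertex has at least n-2 incident edges of the same colour) admits a zero-sum embedding of T. -/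
/-!
Fix a majority colour `maj v` at every vertex; restrictiveness says that at most one edge at `v`
has another colour. Pick a colour `a` that is the majority colour of at least two vertices.
Charging each pair `(y, w)` with `maj y ≠ a = maj w` to the endpoint at which the edge `yw` is
exceptional shows that at most one vertex `x` has `maj x ≠ a`.

If there is no such `x`, the edges not coloured `a` form a matching. A tree that is not a star
packs with any matching: pairing up vertices inside the two colour classes of a 2-colouring of the
tree (plus one non-adjacent cross pair if both classes are odd) gives disjoint non-adjacent pairs
covering all but at most one vertex, and these pairs are sent onto the matching edges. Every edge of
the tree then has colour `a`, and the sum is `(n - 1) • a = 0`.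

If there is such an `x`, every edge avoiding `x` has colour `a` and all edges at `x` but one have
colour `maj x`. Sending a vertex `v₀` of degree `3k` to `x` and a non-neighbour of `v₀` to the other
end of the exceptional edge at `x` gives the sum `3k • maj x + (n - 1 - 3k) • a = 0`.
-/

open SimpleGraph Finset

namespace SimpleGraph

variable {V W : Type*} {T : SimpleGraph V}

theorem IsAcyclic.subsingleton_commonNeighbors (hT : T.IsAcyclic) {a₁ a₂ : V} (ha : a₁ ≠ a₂) :
    (T.commonNeighbors a₁ a₂).Subsingleton := by
  intro b₁ hb₁ b₂ hb₂
  simp only [commonNeighbors, Set.mem_inter_iff, mem_neighborSet] at hb₁ hb₂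
  have hp₁ : (Walk.cons hb₁.1 (Walk.cons hb₁.2.symm .nil)).IsPath := by
    simp [Walk.isPath_def, hb₁.1.ne, hb₁.2.ne', ha]
  have hp₂ : (Walk.cons hb₂.1 (Walk.cons hb₂.2.symm .nil)).IsPath := by
    simp [Walk.isPath_def, hb₂.1.ne, hb₂.2.ne', ha]
  have := congrArg (fun p : T.Path a₁ a₂ => p.1.support)
    ((hT.subsingleton_path a₁ a₂).elim ⟨_, hp₁⟩ ⟨_, hp₂⟩)
  simpa using this

theorem IsAcyclic.eq_starGraph (hT : T.IsAcyclic) {r : V} (hr : T.IsUniversal r) :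
    T = starGraph r :=
  have hle : starGraph r ≤ T := fun _ _ h => by
    rcases starGraph_adj.mp h with ⟨hne, rfl | rfl⟩
    exacts [hr hne, (hr hne.symm).symm]
  le_antisymm ((isTree_iff_maximal_isAcyclic.mp (isTree_starGraph r)).2.2 hT hle) hle

def starGraphIsoCompleteBipartiteGraph [DecidableEq V] (r : V) :
    completeBipartiteGraph {v // v = r} {v // ¬v = r} ≃g starGraph r where
  toEquiv := Equiv.sumCompl _
  map_rel_iff' := by
    rintro (⟨a, rfl⟩ | ⟨a, ha⟩) (⟨b, hb⟩ | ⟨b, hb⟩) <;> simp_all [Ne.symm]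

theorem IsAcyclic.nonempty_iso_of_isUniversal [Fintype V] (hT : T.IsAcyclic) {r : V}
    (hr : T.IsUniversal r) :
    Nonempty (T ≃g completeBipartiteGraph (Fin 1) (Fin (Fintype.card V - 1))) := by
  classical
  rw [hT.eq_starGraph hr]
  refine ⟨(starGraphIsoCompleteBipartiteGraph r).symm.trans
    (completeBipartiteGraphCongr (Fintype.equivFinOfCardEq ?_) (Fintype.equivFinOfCardEq ?_))⟩
  · simp
  · simp [Fintype.card_subtype_compl]

section Pairing

variable [DecidableEq V]

variable (T) in
/-- The complement of `T` induced on `s` has a matching missing at most one vertex of `s`. -/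
inductive NonAdjPairable : Finset V → Prop
  | of_card_le_one {s : Finset V} : #s ≤ 1 → NonAdjPairable s
  | erase_erase {s : Finset V} {u v : V} : u ∈ s → v ∈ s → u ≠ v → ¬T.Adj u v →
      NonAdjPairable ((s.erase u).erase v) → NonAdjPairable s

theorem IsIndepSet.nonAdjPairable_union {A t : Finset V} (hA : T.IsIndepSet (A : Set V))
    (hAt : Disjoint A t) (hev : Even #A) (ht : T.NonAdjPairable t) :
    T.NonAdjPairable (A ∪ t) := by
  induction hk : #A using Nat.strong_induction_on generalizing A with
  | _ k ih =>
  obtain rfl | hne := A.eq_empty_or_nonempty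
  · simpa using ht
  have h2 : 1 < #A := by obtain ⟨m, hm⟩ := hev; have := hne.card_pos; omega
  obtain ⟨a₁, ha₁, a₂, ha₂, h12⟩ := one_lt_card.mp h2
  have ha₂' : a₂ ∈ A.erase a₁ := mem_erase.mpr ⟨h12.symm, ha₂⟩
  refine .erase_erase (mem_union_left _ ha₁) (mem_union_left _ ha₂) h12 (hA ha₁ ha₂ h12) ?_
  have hrest : ((A ∪ t).erase a₁).erase a₂ = (A.erase a₁).erase a₂ ∪ t := by
    rw [erase_union_distrib, erase_union_distrib,
      erase_eq_of_notMem (Finset.disjoint_left.mp hAt ha₁),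
      erase_eq_of_notMem (Finset.disjoint_left.mp hAt ha₂)]
  have hcard : #((A.erase a₁).erase a₂) = k - 2 := by
    rw [card_erase_of_mem ha₂', card_erase_of_mem ha₁]; omega
  rw [hrest]
  exact ih (k - 2) (by omega)
    (hA.mono (coe_subset.mpr ((erase_subset _ _).trans (erase_subset _ _))))
    (hAt.mono_left ((erase_subset _ _).trans (erase_subset _ _)))
    (by rw [hcard, ← hk]; exact hev.tsub even_two) hcard

theorem IsIndepSet.nonAdjPairable {A : Finset V} (hA : T.IsIndepSet (A : Set V)) :
    T.NonAdjPairable A := by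
  rcases Nat.even_or_odd #A with hev | hodd
  · simpa using hA.nonAdjPairable_union (disjoint_empty_right A) hev (.of_card_le_one (by simp))
  · obtain ⟨a, ha⟩ := card_pos.mp hodd.pos
    rw [← erase_union_eq a A ha]
    refine IsIndepSet.nonAdjPairable_union (hA.mono (coe_subset.mpr (erase_subset _ _)))
      (disjoint_singleton_right.mpr (notMem_erase a A)) ?_ (.of_card_le_one (by simp))
    rw [card_erase_of_mem ha]
    exact Nat.Odd.sub_odd hodd odd_one

theorem IsAcyclic.exists_not_adj [Fintype V] (hT : T.IsAcyclic) (hu : ∀ v, ¬T.IsUniversal v)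
    {A B : Finset V} (hAB : A ∪ B = univ) (hA : A.Nonempty) (hB : B.Nonempty) :
    ∃ a ∈ A, ∃ b ∈ B, ¬T.Adj a b := by
  by_contra! h
  have hmem : ∀ w, w ∈ A ∨ w ∈ B := fun w => mem_union.mp (hAB ▸ mem_univ w)
  rcases Nat.lt_or_eq_of_le hA.card_pos with hA₂ | hA₁
  · rcases Nat.lt_or_eq_of_le hB.card_pos with hB₂ | hB₁
    · obtain ⟨a₁, ha₁, a₂, ha₂, ha⟩ := one_lt_card.mp hA₂
      obtain ⟨b₁, hb₁, b₂, hb₂, hb⟩ := one_lt_card.mp hB₂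
      exact hb (hT.subsingleton_commonNeighbors ha ⟨h a₁ ha₁ b₁ hb₁, h a₂ ha₂ b₁ hb₁⟩
        ⟨h a₁ ha₁ b₂ hb₂, h a₂ ha₂ b₂ hb₂⟩)
    · obtain ⟨b, rfl⟩ := card_eq_one.mp hB₁.symm
      refine hu b fun w hw => (h w ?_ b (mem_singleton_self b)).symm
      simpa [Ne.symm hw] using hmem w
  · obtain ⟨a, rfl⟩ := card_eq_one.mp hA₁.symm
    refine hu a fun w hw => h a (mem_singleton_self a) w ?_
    simpa [Ne.symm hw] using hmem w

theorem IsAcyclic.nonAdjPairable_univ [Fintype V] (hT : T.IsAcyclic)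
    (hu : ∀ v, ¬T.IsUniversal v) : T.NonAdjPairable univ := by
  let C := hT.coloringTwo
  have hind (i : Fin 2) : T.IsIndepSet (univ.filter (C · = i) : Set V) := by
    convert C.isIndepSet_colorClass i
    ext; simp [Coloring.colorClass]
  set A := univ.filter (C · = 0)
  set B := univ.filter (C · = 1)
  have hdisj : Disjoint A B := disjoint_filter.mpr fun _ _ h => by simp [h]
  have hAB : A ∪ B = univ := by
    ext v; simp only [A, B, mem_union, mem_filter, mem_univ, true_and, iff_true]; omega
  rw [← hAB]
  rcases Nat.even_or_odd #A with hA | hA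
  · exact (hind 0).nonAdjPairable_union hdisj hA (hind 1).nonAdjPairable
  rcases Nat.even_or_odd #B with hB | hB
  · rw [union_comm]; exact (hind 1).nonAdjPairable_union hdisj.symm hB (hind 0).nonAdjPairable
  obtain ⟨a, ha, b, hb, hab⟩ :=
    hT.exists_not_adj hu hAB (card_pos.mp hA.pos) (card_pos.mp hB.pos)
  have hne : a ≠ b := fun h => Finset.disjoint_left.mp hdisj ha (h ▸ hb)
  refine .erase_erase (mem_union_left _ ha) (mem_union_right _ hb) hne hab ?_
  have hrest : ((A ∪ B).erase a).erase b = A.erase a ∪ B.erase b := by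
    rw [erase_union_distrib, erase_union_distrib,
      erase_eq_of_notMem fun h => Finset.disjoint_left.mp hdisj (mem_of_mem_erase h) hb,
      erase_eq_of_notMem (Finset.disjoint_left.mp hdisj ha)]
  rw [hrest]
  refine IsIndepSet.nonAdjPairable_union ((hind 0).mono (coe_subset.mpr (erase_subset _ _)))
    (hdisj.mono (erase_subset _ _) (erase_subset _ _)) ?_
    (IsIndepSet.nonAdjPairable ((hind 1).mono (coe_subset.mpr (erase_subset _ _))))
  rw [card_erase_of_mem ha]
  exact Nat.Odd.sub_odd hA odd_one

theorem exists_pair_forall_not_adj {M : SimpleGraph W}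
    (hM : ∀ ⦃p q r⦄, M.Adj p q → M.Adj p r → q = r) {P : Finset W} (hP : 1 < #P) :
    ∃ p ∈ P, ∃ q ∈ P, p ≠ q ∧ ∀ r ∈ P, r ≠ p → r ≠ q → ¬M.Adj p r ∧ ¬M.Adj q r := by
  by_cases h : ∃ p ∈ P, ∃ q ∈ P, M.Adj p q
  · obtain ⟨p, hp, q, hq, hpq⟩ := h
    exact ⟨p, hp, q, hq, hpq.ne, fun r _ hrp hrq =>
      ⟨fun h => hrq (hM hpq h).symm, fun h => hrp (hM hpq.symm h).symm⟩⟩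
  · push Not at h
    obtain ⟨p, hp, q, hq, hpq⟩ := one_lt_card.mp hP
    exact ⟨p, hp, q, hq, hpq, fun r hr _ _ => ⟨h p hp r hr, h q hq r hr⟩⟩

variable (T) in
def IsPackingOn (M : SimpleGraph W) (s : Finset V) (P : Finset W) (g : V → W) : Prop :=
  Set.InjOn g s ∧ Set.MapsTo g s P ∧ ∀ u ∈ s, ∀ v ∈ s, T.Adj u v → ¬M.Adj (g u) (g v)

theorem IsPackingOn.update_update [DecidableEq W] {M : SimpleGraph W} {s : Finset V}
    {P : Finset W} {g : V → W} {u v : V} {p q : W}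
    (hg : T.IsPackingOn M ((s.erase u).erase v) ((P.erase p).erase q) g)
    (hu : u ∈ s) (hv : v ∈ s) (huv : u ≠ v) (hadj : ¬T.Adj u v) (hp : p ∈ P) (hq : q ∈ P)
    (hpq : p ≠ q) (hfree : ∀ r ∈ P, r ≠ p → r ≠ q → ¬M.Adj p r ∧ ¬M.Adj q r) :
    T.IsPackingOn M s P (Function.update (Function.update g v q) u p) := by
  obtain ⟨hinj, hmaps, hedge⟩ := hg
  have hcases : ∀ x ∈ s, x = u ∨ x = v ∨ x ∈ (s.erase u).erase v := by
    intro x hx; simp only [mem_erase]; tauto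
  have hg : ∀ x ∈ (s.erase u).erase v, x ≠ u ∧ x ≠ v ∧ g x ∈ P ∧ g x ≠ p ∧ g x ≠ q := by
    intro x hx
    have := hmaps hx
    simp only [mem_coe, mem_erase] at hx this
    exact ⟨hx.2.1, hx.1, this.2.2, this.2.1, this.1⟩
  set G := Function.update (Function.update g v q) u p
  have hGu : G u = p := by simp [G]
  have hGv : G v = q := by simp [G, huv.symm]
  have hGg : ∀ x ∈ (s.erase u).erase v, G x = g x := fun x hx => by
    simp [G, (hg x hx).1, (hg x hx).2.1]
  clear_value G
  refine ⟨fun x hx y hy hxy => ?_, fun x hx => ?_, fun x hx y hy hxy => ?_⟩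
  · rcases hcases x hx with rfl | rfl | hx' <;> rcases hcases y hy with rfl | rfl | hy'
    all_goals first
      | rfl
      | exact hinj hx' hy' (by rwa [hGg x hx', hGg y hy'] at hxy)
      | grind
  · rcases hcases x hx with rfl | rfl | hx'
    all_goals grind
  · have hfree' := fun x hx => hfree (g x) (hg x hx).2.2.1 (hg x hx).2.2.2.1 (hg x hx).2.2.2.2
    rcases hcases x hx with rfl | rfl | hx' <;> rcases hcases y hy with rfl | rfl | hy'
    all_goals first
      | exact absurd rfl hxy.ne
      | exact absurd hxy hadj
      | exact absurd hxy.symm hadj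
      | simpa only [hGg x hx', hGg y hy'] using hedge x hx' y hy' hxy
      | grind [M.adj_comm]

theorem NonAdjPairable.exists_isPackingOn [Nonempty W] {M : SimpleGraph W}
    (hM : ∀ ⦃p q r⦄, M.Adj p q → M.Adj p r → q = r) {s : Finset V} (hs : T.NonAdjPairable s)
    {P : Finset W} (hP : #s = #P) : ∃ g, T.IsPackingOn M s P g := by
  induction hs generalizing P with
  | @of_card_le_one s hs =>
    refine ⟨fun _ => if h : P.Nonempty then h.choose else Classical.arbitrary W,
      fun x hx y hy _ => card_le_one.mp hs x hx y hy, fun x hx => ?_,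
      fun u hu v hv huv => absurd (card_le_one.mp hs u hu v hv) huv.ne⟩
    have hP' : P.Nonempty := card_pos.mp (hP ▸ card_pos.mpr ⟨x, hx⟩)
    simp [hP', hP'.choose_spec]
  | @erase_erase s u v hu hv huv hadj _ ih =>
    classical
    obtain ⟨p, hp, q, hq, hpq, hfree⟩ :=
      exists_pair_forall_not_adj hM (hP ▸ one_lt_card.mpr ⟨u, hu, v, hv, huv⟩)
    have hv' : v ∈ s.erase u := mem_erase.mpr ⟨huv.symm, hv⟩
    have hq' : q ∈ P.erase p := mem_erase.mpr ⟨hpq.symm, hq⟩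
    obtain ⟨g, hg⟩ := ih (P := (P.erase p).erase q) (by
      rw [card_erase_of_mem hv', card_erase_of_mem hu, card_erase_of_mem hq',
        card_erase_of_mem hp, hP])
    exact ⟨_, hg.update_update hu hv huv hadj hp hq hpq hfree⟩

theorem NonAdjPairable.exists_embedding [Fintype V] [Fintype W] [Nonempty W]
    {M : SimpleGraph W} (hM : ∀ ⦃p q r⦄, M.Adj p q → M.Adj p r → q = r)
    (hT : T.NonAdjPairable univ) (hVW : Fintype.card V = Fintype.card W) :
    ∃ f : V ↪ W, ∀ u v, T.Adj u v → ¬M.Adj (f u) (f v) := by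
  obtain ⟨g, hinj, -, hg⟩ := hT.exists_isPackingOn hM (P := univ) (by simpa using hVW)
  exact ⟨⟨g, by simpa using hinj⟩, fun u v h => hg u (mem_univ u) v (mem_univ v) h⟩

end Pairing

end SimpleGraph

theorem Fintype.exists_equiv_apply_eq_apply_eq {V W : Type*} [Fintype V] [Fintype W]
    (h : Fintype.card V = Fintype.card W) {v₁ v₂ : V} {w₁ w₂ : W}
    (hv : v₁ ≠ v₂) (hw : w₁ ≠ w₂) : ∃ f : V ≃ W, f v₁ = w₁ ∧ f v₂ = w₂ := by
  classical
  let f₁ := (Fintype.equivOfCardEq h).trans (Equiv.swap (Fintype.equivOfCardEq h v₁) w₁)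
  have hf₁ : f₁ v₁ = w₁ := by simp [f₁]
  refine ⟨f₁.trans (Equiv.swap (f₁ v₂) w₂), ?_, by simp⟩
  rw [Equiv.trans_apply, hf₁, Equiv.swap_apply_of_ne_of_ne (hf₁ ▸ f₁.injective.ne hv) hw]

section Restrictive

open SimpleGraph

variable {V W K : Type*} {c : Sym2 W → K} {maj : W → K}

variable (c maj) in
/-- The paper's restrictive colourings, with a majority colour `maj v` fixed at every vertex. -/
def IsRestrictiveWith : Prop :=
  ∀ ⦃v w₁ w₂ : W⦄, w₁ ≠ v → w₂ ≠ v → c s(v, w₁) ≠ maj v → c s(v, w₂) ≠ maj v → w₁ = w₂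

theorem isRestrictiveWith_of_le_card [Fintype W] [DecidableEq W] [DecidableEq K]
    (h : ∀ v, Fintype.card W - 2 ≤ #{w | w ≠ v ∧ c s(v, w) = maj v}) :
    IsRestrictiveWith c maj := by
  intro v w₁ w₂ h₁ h₂ h₁' h₂'
  have hsplit := card_filter_add_card_filter_not (s := univ.filter (· ≠ v))
    (fun w => c s(v, w) = maj v)
  rw [filter_filter, filter_filter, filter_ne', card_erase_of_mem (mem_univ v), card_univ] at hsplit
  have hle : #{w | w ≠ v ∧ ¬c s(v, w) = maj v} ≤ 1 := by have := h v; omega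
  exact card_le_one.mp hle w₁ (by simp [h₁, h₁']) w₂ (by simp [h₂, h₂'])

theorem IsRestrictiveWith.card_mul_card_le [Fintype W] [DecidableEq K]
    (hc : IsRestrictiveWith c maj) (a : K) :
    #{v | maj v ≠ a} * #{v | maj v = a} ≤ Fintype.card W := by
  rw [← card_product, ← card_univ]
  -- each pair (y, w) is charged to the endpoint at which the edge `yw` is exceptional
  refine card_le_card_of_injOn (fun x => if c s(x.1, x.2) = maj x.1 then x.2 else x.1)
    (fun _ _ => mem_univ _) ?_
  rintro ⟨y, w⟩ h ⟨y', w'⟩ h' heq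
  simp only [coe_product, coe_filter, mem_univ, true_and, Set.mem_prod, Set.mem_ofPred_eq] at h h'
  have hyw : w ≠ y := fun e => h.1 (e ▸ h.2)
  have hyw' : w' ≠ y' := fun e => h'.1 (e ▸ h'.2)
  dsimp only at heq
  by_cases e : c s(y, w) = maj y <;> by_cases e' : c s(y', w') = maj y'
  · rw [if_pos e, if_pos e'] at heq
    subst heq
    have hx : c s(w, y) ≠ maj w := by rw [Sym2.eq_swap, e, h.2]; exact h.1
    have hx' : c s(w, y') ≠ maj w := by rw [Sym2.eq_swap, e', h.2]; exact h'.1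
    exact Prod.ext (hc hyw.symm hyw'.symm hx hx') rfl
  · rw [if_pos e, if_neg e'] at heq
    exact absurd (heq ▸ h.2) h'.1
  · rw [if_neg e, if_pos e'] at heq
    exact absurd (heq ▸ h'.2) h.1
  · rw [if_neg e, if_neg e'] at heq
    subst heq
    exact Prod.ext rfl (hc hyw hyw' e e')

theorem IsRestrictiveWith.exists_forall_ne_maj_eq [Fintype W] [Fintype K]
    (hc : IsRestrictiveWith c maj) (hK : Fintype.card K < Fintype.card W)
    (hW : 5 ≤ Fintype.card W) : ∃ a x, ∀ y, y ≠ x → maj y = a := by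
  classical
  obtain ⟨a, ha⟩ := Fintype.exists_lt_card_fiber_of_mul_lt_card maj (n := 1) (by simpa using hK)
  have hsplit := card_filter_add_card_filter_not (s := univ) (fun v => maj v = a)
  have hprod := hc.card_mul_card_le a
  rw [card_univ] at hsplit
  have : Nonempty W := Fintype.card_pos_iff.mp (by omega)
  obtain ⟨x, hx⟩ := card_le_one_iff_subset_singleton.mp (show #{v | maj v ≠ a} ≤ 1 by nlinarith)
  refine ⟨a, x, fun y hy => ?_⟩
  by_contra hya
  exact hy (mem_singleton.mp (hx (by simpa using hya)))

theorem IsRestrictiveWith.eq_of_ne_of_ne (hc : IsRestrictiveWith c maj) {a : K} {x : W}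
    (hx : maj x ≠ a) (hmaj : ∀ y, y ≠ x → maj y = a) {p q : W} (hpq : p ≠ q) (hp : p ≠ x)
    (hq : q ≠ x) : c s(p, q) = a := by
  by_contra h
  -- `pq` is exceptional at `p` and at `q`, so `px` and `qx` are not, hence both are at `x`
  have hpx : c s(x, p) = a := by
    by_contra h'
    rw [Sym2.eq_swap, ← hmaj p hp] at h'
    exact hq (hc hpq.symm hp.symm (hmaj p hp ▸ h) h')
  have hqx : c s(x, q) = a := by
    by_contra h'
    rw [Sym2.eq_swap, ← hmaj q hq] at h'
    exact hp (hc hpq hq.symm (by rw [Sym2.eq_swap, hmaj q hq]; exact h) h')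
  exact hpq (hc hp hq (hpx ▸ hx.symm) (hqx ▸ hx.symm))

theorem IsRestrictiveWith.exists_exception [Nontrivial W] (hc : IsRestrictiveWith c maj)
    (v : W) : ∃ w₀, w₀ ≠ v ∧ ∀ w, w ≠ v → w ≠ w₀ → c s(v, w) = maj v := by
  by_cases h : ∃ w₀, w₀ ≠ v ∧ c s(v, w₀) ≠ maj v
  · obtain ⟨w₀, hw₀, h₀⟩ := h
    exact ⟨w₀, hw₀, fun w hw hww₀ => by_contra fun h' => hww₀ (hc hw hw₀ h' h₀)⟩
  · push Not at h
    obtain ⟨w₀, hw₀⟩ := exists_ne v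
    exact ⟨w₀, hw₀, fun w hw _ => h w hw⟩

variable [Fintype V] [Fintype W] {T : SimpleGraph V}

theorem IsRestrictiveWith.exists_embedding_of_forall_maj_eq [DecidableEq V] [Nonempty W]
    (hc : IsRestrictiveWith c maj) {a : K} (hmaj : ∀ v, maj v = a) (hT : T.NonAdjPairable univ)
    (hVW : Fintype.card V = Fintype.card W) :
    ∃ f : V ↪ W, ∀ u v, T.Adj u v → c s(f u, f v) = a := by
  have hM : ∀ ⦃p q r⦄, (fromRel fun p q => c s(p, q) ≠ a).Adj p q →
      (fromRel fun p q => c s(p, q) ≠ a).Adj p r → q = r := by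
    intro p q r hq hr
    simp only [fromRel_adj, Sym2.eq_swap (a := q), Sym2.eq_swap (a := r), or_self] at hq hr
    exact hc hq.1.symm hr.1.symm (hmaj p ▸ hq.2) (hmaj p ▸ hr.2)
  obtain ⟨f, hf⟩ := hT.exists_embedding hM hVW
  exact ⟨f, fun u v h => by_contra fun h' =>
    hf u v h ((fromRel_adj _ _ _).mpr ⟨f.injective.ne h.ne, Or.inl h'⟩)⟩

theorem IsRestrictiveWith.exists_embedding_of_maj_ne [Nontrivial W]
    (hc : IsRestrictiveWith c maj) {a : K} {x : W} (hx : maj x ≠ a)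
    (hmaj : ∀ y, y ≠ x → maj y = a) {v₀ ℓ : V} (hℓ : v₀ ≠ ℓ) (hv₀ℓ : ¬T.Adj v₀ ℓ)
    (hVW : Fintype.card V = Fintype.card W) :
    ∃ f : V ↪ W, (∀ u, T.Adj v₀ u → c s(f v₀, f u) = maj x) ∧
      ∀ u v, T.Adj u v → u ≠ v₀ → v ≠ v₀ → c s(f u, f v) = a := by
  obtain ⟨w₀, hw₀, hexc⟩ := hc.exists_exception x
  obtain ⟨f, hf₀, hfℓ⟩ := Fintype.exists_equiv_apply_eq_apply_eq hVW hℓ hw₀.symm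
  refine ⟨f.toEmbedding, fun u hu => ?_, fun u v huv hu hv => ?_⟩
  · simp only [Equiv.coe_toEmbedding, hf₀]
    exact hexc (f u) (hf₀ ▸ f.injective.ne hu.ne')
      (hfℓ ▸ f.injective.ne fun h => hv₀ℓ (h ▸ hu))
  · exact hc.eq_of_ne_of_ne hx hmaj (f.injective.ne huv.ne) (hf₀ ▸ f.injective.ne hu)
      (hf₀ ▸ f.injective.ne hv)

theorem IsRestrictiveWith.exists_embedding [DecidableEq V] [Fintype K]
    (hc : IsRestrictiveWith c maj) (hT : T.IsAcyclic) (hu : ∀ v, ¬T.IsUniversal v)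
    (hVW : Fintype.card V = Fintype.card W) (hK : Fintype.card K < Fintype.card W)
    (hW : 5 ≤ Fintype.card W) (v₀ : V) :
    ∃ f : V ↪ W, ∃ a b : K, (∀ u, T.Adj v₀ u → c s(f v₀, f u) = b) ∧
      ∀ u v, T.Adj u v → u ≠ v₀ → v ≠ v₀ → c s(f u, f v) = a := by
  have : Nontrivial W := Fintype.one_lt_card_iff_nontrivial.mp (by omega)
  obtain ⟨a, x, hmaj⟩ := hc.exists_forall_ne_maj_eq hK hW
  by_cases hx : maj x = a
  · have hall v : maj v = a := by by_cases h : v = x <;> simp [h, hx, hmaj]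
    obtain ⟨f, hf⟩ := hc.exists_embedding_of_forall_maj_eq hall (hT.nonAdjPairable_univ hu) hVW
    exact ⟨f, a, a, fun u h => hf _ _ h, fun u v h _ _ => hf u v h⟩
  · obtain ⟨ℓ, hℓ, hv₀ℓ⟩ : ∃ ℓ, v₀ ≠ ℓ ∧ ¬T.Adj v₀ ℓ := by
      simpa [IsUniversal] using hu v₀
    obtain ⟨f, hf⟩ := hc.exists_embedding_of_maj_ne hx hmaj hℓ hv₀ℓ hVW
    exact ⟨f, a, maj x, hf⟩

end Restrictive

theorem SimpleGraph.sum_edgeFinset_map_eq {V W K : Type*} [Fintype V] [DecidableEq V]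
    [AddCommMonoid K] {T : SimpleGraph V} [DecidableRel T.Adj] (c : Sym2 W → K) (f : V → W)
    {v₀ : V} {a b : K} (hb : ∀ u, T.Adj v₀ u → c s(f v₀, f u) = b)
    (ha : ∀ u v, T.Adj u v → u ≠ v₀ → v ≠ v₀ → c s(f u, f v) = a) :
    ∑ e ∈ T.edgeFinset, c (e.map f) = T.degree v₀ • b + (#T.edgeFinset - T.degree v₀) • a := by
  have hin : ∀ e ∈ T.incidenceFinset v₀, c (e.map f) = b := by
    intro e he
    induction e using Sym2.ind with
    | _ u v =>
    rw [mem_incidenceFinset, mk'_mem_incidenceSet_iff] at he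
    rcases he with ⟨h, rfl | rfl⟩
    · exact hb v h
    · rw [Sym2.map_mk, Sym2.eq_swap]; exact hb u h.symm
  have hout : ∀ e ∈ T.edgeFinset.filter (v₀ ∉ ·), c (e.map f) = a := by
    intro e he
    induction e using Sym2.ind with
    | _ u v =>
    simp only [mem_filter, mem_edgeFinset, mem_edgeSet, Sym2.mem_iff, not_or] at he
    exact ha u v he.1 (Ne.symm he.2.1) (Ne.symm he.2.2)
  have hsplit := card_filter_add_card_filter_not (s := T.edgeFinset) (v₀ ∈ ·)
  rw [← T.incidenceFinset_eq_filter, card_incidenceFinset_eq_degree] at hsplit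
  rw [← sum_filter_add_sum_filter_not T.edgeFinset (v₀ ∈ ·), ← T.incidenceFinset_eq_filter,
    sum_congr rfl hin, sum_congr rfl hout, sum_const, sum_const, card_incidenceFinset_eq_degree,
    ← hsplit, Nat.add_sub_cancel_left]

theorem stmt_12 {V : Type} [Fintype V] [DecidableEq V] {n : ℕ}
    (hV : Fintype.card V = n) (hn1 : n % 3 = 1) (hn : 6 ≤ n)
    (T : SimpleGraph V) [DecidableRel T.Adj]
    (hconn : T.Connected) (hacyc : T.IsAcyclic)
    (hstar : ¬ Nonempty (T ≃g completeBipartiteGraph (Fin 1) (Fin (n - 1))))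
    (hdeg : ∃ v : V, 3 ∣ T.degree v)
    (c : Sym2 (Fin n) → ZMod 3)
    (hres : ∀ v : Fin n, ∃ a : ZMod 3,
      n - 2 ≤ (univ.filter fun w => w ≠ v ∧ c s(v, w) = a).card) :
    ∃ f : V ↪ Fin n, ∑ e ∈ T.edgeFinset, c (e.map f) = 0 := by
  choose maj hmaj using hres
  have hc : IsRestrictiveWith c maj := isRestrictiveWith_of_le_card (by simpa using hmaj)
  have hu : ∀ v, ¬T.IsUniversal v := fun v hv => hstar (hV ▸ hacyc.nonempty_iso_of_isUniversal hv)
  obtain ⟨v₀, hv₀⟩ := hdeg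
  obtain ⟨f, a, b, hb, ha⟩ :=
    hc.exists_embedding hacyc hu (by simp [hV]) (by simp; omega) (by simp; omega) v₀
  have hE : #T.edgeFinset = n - 1 := by
    have := IsTree.card_edgeFinset ⟨hconn, hacyc⟩; omega
  have hsmul : ∀ m, 3 ∣ m → ∀ x : ZMod 3, m • x = 0 := fun m hm x => by
    rw [nsmul_eq_mul, (ZMod.natCast_eq_zero_iff m 3).mpr hm, zero_mul]
  refine ⟨f, ?_⟩
  rw [sum_edgeFinset_map_eq c f hb ha, hE, hsmul _ hv₀, hsmul _ (by omega), add_zero]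
end

section
/- Let f be an edge-colouring of K_n by Z_3 and let G be a graph. Suppose h is a vertex of K_n incident to edges {h,a}, {h,b}, {h,c} with f(h,a), f(h,b), f(h,c) pairwise distinct, and u is a vertex of G with a leaf neighbour w. If there exists an embedding of G \ {w} into the clique on the vertices of K_n other than a, b, c with u mapped to h, then K_n contains a zero-sum copy of G. -/
open SimpleGraph Finset

private lemma zmod3_cover : ∀ (x y z v : ZMod 3), x ≠ y → x ≠ z → y ≠ z →
    (v = x ∨ v = y ∨ v = z) := by decide

theorem stmt_15 {W : Type} [Fintype W] [DecidableEq W] {n : ℕ}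
    (G : SimpleGraph W) [DecidableRel G.Adj]
    (c : Sym2 (Fin n) → ZMod 3)
    (h a b d : Fin n) (hah : a ≠ h) (hbh : b ≠ h) (hdh : d ≠ h)
    (hab : c s(h, a) ≠ c s(h, b)) (had : c s(h, a) ≠ c s(h, d))
    (hbd : c s(h, b) ≠ c s(h, d))
    (u w : W) (huw : G.Adj u w) (hwdeg : G.degree w = 1)
    (hemb : ∃ g : W → Fin n, Set.InjOn g {w}ᶜ ∧ g u = h ∧
      ∀ x : W, x ≠ w → g x ≠ a ∧ g x ≠ b ∧ g x ≠ d) :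
    ∃ f : W ↪ Fin n, ∑ e ∈ G.edgeFinset, c (e.map f) = 0 := by
  obtain ⟨g, hginj, hgu, hgavoid⟩ := hemb
  have huw' : u ≠ w := G.ne_of_adj huw
  -- neighborFinset of w is exactly {u}
  have hdeg : (G.neighborFinset w).card = 1 := hwdeg
  obtain ⟨x0, hx0⟩ := Finset.card_eq_one.mp hdeg
  have humem : u ∈ G.neighborFinset w := by
    rw [SimpleGraph.mem_neighborFinset]; exact huw.symm
  have hnbr : G.neighborFinset w = {u} := by
    rw [hx0] at humem ⊢
    have : u = x0 := Finset.mem_singleton.mp humem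
    rw [this]
  -- edges other than s(u,w) avoid w
  have hnotw : ∀ e ∈ G.edgeFinset.erase s(u, w), ∀ x ∈ e, x ≠ w := by
    intro e he
    obtain ⟨hne, heE⟩ := Finset.mem_erase.mp he
    rw [SimpleGraph.mem_edgeFinset] at heE
    induction e using Sym2.ind with
    | _ p q =>
      rw [SimpleGraph.mem_edgeSet] at heE
      intro x hx hxw
      subst hxw
      rw [Sym2.mem_iff] at hx
      rcases hx with rfl | rfl
      · have : q ∈ G.neighborFinset x := by
          rw [SimpleGraph.mem_neighborFinset]; exact heE
        rw [hnbr, Finset.mem_singleton] at this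
        subst this
        exact hne (Sym2.eq_swap)
      · have : p ∈ G.neighborFinset x := by
          rw [SimpleGraph.mem_neighborFinset]; exact heE.symm
        rw [hnbr, Finset.mem_singleton] at this
        subst this
        exact hne rfl
  set F : Fin n → W → Fin n := fun t x => if x = w then t else g x with hF
  have hinj : ∀ t : Fin n, (∀ x, x ≠ w → g x ≠ t) → Function.Injective (F t) := by
    intro t ht x y hxy
    simp only [hF] at hxy
    by_cases hx : x = w <;> by_cases hy : y = w
    · rw [hx, hy]
    · rw [if_pos hx, if_neg hy] at hxy; exact absurd hxy.symm (ht y hy)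
    · rw [if_neg hx, if_pos hy] at hxy; exact absurd hxy (ht x hx)
    · rw [if_neg hx, if_neg hy] at hxy
      exact hginj (Set.mem_compl_singleton_iff.mpr hx) (Set.mem_compl_singleton_iff.mpr hy) hxy
  have hmemE : s(u, w) ∈ G.edgeFinset := by
    rw [SimpleGraph.mem_edgeFinset, SimpleGraph.mem_edgeSet]; exact huw
  have hsum : ∀ t : Fin n, ∑ e ∈ G.edgeFinset, c (Sym2.map (F t) e)
      = c s(h, t) + ∑ e ∈ G.edgeFinset.erase s(u, w), c (Sym2.map g e) := by
    intro t
    rw [← Finset.add_sum_erase _ _ hmemE]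
    congr 1
    · have h1 : F t u = h := by simp [hF, huw', hgu]
      have h2 : F t w = t := by simp [hF]
      rw [Sym2.map_pair_eq, h1, h2]
    · apply Finset.sum_congr rfl
      intro e he
      have hw := hnotw e he
      congr 1
      induction e using Sym2.ind with
      | _ p q =>
        rw [Sym2.map_pair_eq, Sym2.map_pair_eq]
        have hp : p ≠ w := hw p (Sym2.mem_mk_left p q)
        have hq : q ≠ w := hw q (Sym2.mem_mk_right p q)
        simp [hF, hp, hq]
  set S : ZMod 3 := ∑ e ∈ G.edgeFinset.erase s(u, w), c (Sym2.map g e) with hS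
  have hcover := zmod3_cover (c s(h, a)) (c s(h, b)) (c s(h, d)) (-S) hab had hbd
  have key : ∃ t : Fin n, (∀ x, x ≠ w → g x ≠ t) ∧ c s(h, t) = -S := by
    rcases hcover with h1 | h1 | h1
    · exact ⟨a, fun x hx => (hgavoid x hx).1, h1.symm⟩
    · exact ⟨b, fun x hx => (hgavoid x hx).2.1, h1.symm⟩
    · exact ⟨d, fun x hx => (hgavoid x hx).2.2, h1.symm⟩
  obtain ⟨t, havoid, hct⟩ := key
  refine ⟨⟨F t, hinj t havoid⟩, ?_⟩
  have : ∑ e ∈ G.edgeFinset, c (Sym2.map (F t) e) = 0 := by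
    rw [hsum t, hct]
    ring
  exact this
end

section
/- Let k1 ≥ 2 and let D(k1,1) be the double-star obtained by joining the centres of the stars K_{1,k1} and K_{1,1} by an edge, so D(k1,1) has n = k1 + 3 vertices; assume n ≡ 1 (mod 3). Then R(D(k1,1), Z_3) = n + 1. -/
/-!
Lower bound: colour the edges at one vertex `z` of `K_n` by `1` and all other edges by `0`.
An embedding of `D(k,1)` into `K_n` is onto, so its colour sum is the degree of the preimage of
`z`, which is `k + 1`, `2` or `1`; none of these is divisible by `3`.

Upper bound: in `K_{n+1}` an embedding of `D(k,1)` misses exactly one vertex `x`; if `u, v, w`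
are the images of the centre `0`, the centre `1` and its leaf, the colour sum is
`c(vw) + T(u) - c(uw) - c(ux)`, where `T(u)` is the sum of the colours at `u`. Suppose no
quadruple makes this vanish. Then at every vertex some colour is missing (pigeonhole), no
two colours both occur twice, and no star is monochromatic. Hence at every vertex one colour
occurs exactly once, and the other end of that edge carries a monochromatic star: contradiction.
The congruence `n ≡ 1 (mod 3)` enters through `T`: if every edge at `u` except possibly `ub`
has colour `a`, then `T(u) = c(ub)`, and `T(u) = a` if the star is monochromatic.
-/

open SimpleGraph Finset
open scoped Classical

/-- The double-star `D(k, 1)`: vertex `0` is a centre adjacent to the centre `1`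
and to the `k` leaves `2, …, k + 1`; vertex `1` is additionally adjacent to the
leaf `k + 2`. It has `k + 3` vertices. -/
def doubleStar (k : ℕ) : SimpleGraph (Fin (k + 3)) :=
  SimpleGraph.fromRel (fun i j =>
    ((i : ℕ) = 0 ∧ (j : ℕ) = 1) ∨
    ((i : ℕ) = 0 ∧ 2 ≤ (j : ℕ) ∧ (j : ℕ) ≤ k + 1) ∨
    ((i : ℕ) = 1 ∧ (j : ℕ) = k + 2))

theorem doubleStar_edgeFinset (k : ℕ) :
    (doubleStar k).edgeFinset =
      insert s(1, Fin.last _) ((univ \ {0, Fin.last _}).image fun j => s(0, j)) := by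
  ext e
  induction e using Sym2.ind with
  | _ a b =>
    rw [mem_edgeFinset, mem_edgeSet, doubleStar, fromRel_adj]
    simp only [mem_insert, mem_image, mem_sdiff, mem_univ, true_and, Sym2.eq_iff, mem_singleton,
      and_or_left, exists_or, exists_eq_right_right]
    simp only [Fin.ext_iff, Fin.val_last, Fin.val_zero, Fin.val_one]
    omega

theorem sum_edgeFinset_doubleStar {M : Type*} [AddCommMonoid M] (k : ℕ)
    (h : Sym2 (Fin (k + 3)) → M) :
    ∑ e ∈ (doubleStar k).edgeFinset, h e =
      h s(1, Fin.last _) + ∑ j ∈ univ \ {0, Fin.last _}, h s(0, j) := by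
  rw [doubleStar_edgeFinset, sum_insert, sum_image]
  · exact fun i _ j _ hij => Sym2.congr_right.mp hij
  · simp only [mem_image, mem_sdiff, mem_univ, true_and, mem_insert, mem_singleton, Sym2.eq_iff,
      not_exists, Fin.ext_iff, Fin.val_zero, Fin.val_one, Fin.val_last]
    omega

theorem SimpleGraph.sum_edgeFinset_boole_mem {W R : Type*} [Fintype W] [DecidableEq W]
    [AddCommMonoidWithOne R] (G : SimpleGraph W) [DecidableRel G.Adj] (i : W) :
    ∑ e ∈ G.edgeFinset, (if i ∈ e then 1 else 0 : R) = G.degree i := by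
  rw [sum_boole, ← incidenceFinset_eq_filter, card_incidenceFinset_eq_degree]

theorem SimpleGraph.sum_edgeFinset_boole_mem_map {W V R : Type*} [Fintype W] [DecidableEq W]
    [DecidableEq V] [AddCommMonoidWithOne R] (G : SimpleGraph W) [DecidableRel G.Adj]
    (f : W ↪ V) (i : W) :
    ∑ e ∈ G.edgeFinset, (if f i ∈ e.map f then 1 else 0 : R) = G.degree i := by
  have hmem (e : Sym2 W) : f i ∈ e.map f ↔ i ∈ e :=
    Sym2.mem_map.trans ⟨fun ⟨_, ha, h⟩ => f.injective h ▸ ha, fun h => ⟨i, h, rfl⟩⟩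
  simp only [hmem, sum_edgeFinset_boole_mem]

theorem doubleStar_degree (k : ℕ) (i : Fin (k + 3)) :
    (doubleStar k).degree i = if i = 0 then k + 1 else if i = 1 then 2 else 1 := by
  have h01 : (0 : Fin (k + 3)) ≠ 1 := by simp
  have h0l : (0 : Fin (k + 3)) ≠ Fin.last _ := by simp [Fin.ext_iff]
  have h1l : (1 : Fin (k + 3)) ≠ Fin.last _ := by simp [Fin.ext_iff]
  rw [← Nat.cast_id ((doubleStar k).degree i), ← sum_edgeFinset_boole_mem,
    sum_edgeFinset_doubleStar]
  by_cases h0 : i = 0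
  · subst h0
    simp [card_univ_sdiff, card_pair h0l, h01, h0l]
  · simp only [Sym2.mem_iff, h0, false_or, if_false, sum_ite_eq, mem_sdiff, mem_univ, true_and,
      mem_insert, mem_singleton]
    by_cases h1 : i = 1
    · simp [h1, h1l]
    · by_cases hl : i = Fin.last _ <;> simp [h1, hl, h1l.symm]

theorem doubleStar_degree_ne_zero {k : ℕ} (hk : k % 3 = 1) (i : Fin (k + 3)) :
    ((doubleStar k).degree i : ZMod 3) ≠ 0 := by
  rw [doubleStar_degree, ← ZMod.natCast_mod]
  split_ifs
  · rw [show (k + 1) % 3 = 2 by omega]; decide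
  all_goals decide

theorem exists_forall_sum_doubleStar_ne_zero {k : ℕ} (hk : k % 3 = 1) :
    ∃ c : Sym2 (Fin (k + 3)) → ZMod 3, ∀ f : Fin (k + 3) ↪ Fin (k + 3),
      ∑ e ∈ (doubleStar k).edgeFinset, c (e.map f) ≠ 0 := by
  refine ⟨fun e => if 0 ∈ e then 1 else 0, fun f => ?_⟩
  obtain ⟨i, hi⟩ := Finite.injective_iff_surjective.mp f.injective 0
  rw [← hi, sum_edgeFinset_boole_mem_map]
  exact doubleStar_degree_ne_zero hk i

section Colouring

variable {V : Type*} [Fintype V] [DecidableEq V]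

theorem Fintype.exists_ne_of_three_lt_card (h : 3 < Fintype.card V) (a b d : V) :
    ∃ x, x ≠ a ∧ x ≠ b ∧ x ≠ d := by
  obtain ⟨x, -, hx⟩ := exists_mem_notMem_of_card_lt_card (t := univ)
    (card_le_three.trans_lt (by rwa [card_univ]) : #{a, b, d} < #univ)
  simp only [mem_insert, mem_singleton, not_or] at hx
  exact ⟨x, hx⟩

def starSum {R : Type*} [AddCommMonoid R] (c : Sym2 V → R) (u : V) : R :=
  ∑ y ∈ univ.erase u, c s(u, y)

theorem sum_doubleStar_map {R : Type*} [AddCommGroup R] {k : ℕ} (c : Sym2 V → R)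
    (g : Fin (k + 3) ↪ V) {x : V} (hg : univ.map g = univ.erase x) :
    ∑ e ∈ (doubleStar k).edgeFinset, c (e.map g) =
      c s(g 1, g (Fin.last _)) + (starSum c (g 0) - c s(g 0, g (Fin.last _)) - c s(g 0, x)) := by
  have hx (i : Fin (k + 3)) : g i ≠ x := by
    simpa using (hg ▸ mem_map_of_mem g (mem_univ i) : g i ∈ univ.erase x)
  have hl0 : g (Fin.last _) ≠ g 0 := g.injective.ne (by simp [Fin.ext_iff])
  have hleaves : (univ \ {0, Fin.last _}).map g = univ.erase (g 0) \ {g (Fin.last _), x} := by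
    rw [Finset.map_sdiff, hg, map_insert, map_singleton]
    ext y
    simp only [mem_sdiff, mem_erase, mem_univ, mem_insert, mem_singleton]
    tauto
  have hsub : {g (Fin.last _), x} ⊆ univ.erase (g 0) := by
    simp [insert_subset_iff, hl0, (hx 0).symm]
  rw [sum_edgeFinset_doubleStar]
  simp only [Sym2.map_mk]
  rw [← sum_map (univ \ {0, Fin.last _}) g (fun y => c s(g 0, y)), hleaves,
    sum_sdiff_eq_sub hsub, sum_pair (hx _), sub_sub, starSum]

theorem exists_embedding_doubleStar {k : ℕ} (hV : Fintype.card V = k + 4) {u v w x : V}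
    (hvu : v ≠ u) (hwu : w ≠ u) (hxu : x ≠ u) (hvw : v ≠ w) (hxv : x ≠ v) (hxw : x ≠ w) :
    ∃ g : Fin (k + 3) ↪ V,
      g 0 = u ∧ g 1 = v ∧ g (Fin.last _) = w ∧ univ.map g = univ.erase x := by
  have h01 : (1 : Fin (k + 3)) ≠ 0 := by simp
  have h0l : Fin.last (k + 2) ≠ 0 := by simp [Fin.ext_iff]
  have h1l : Fin.last (k + 2) ≠ 1 := by simp [Fin.ext_iff]
  set p : Fin (k + 3) → V := fun i => if i = 0 then u else if i = 1 then v else w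
  have hp0 : p 0 = u := by simp [p]
  have hp1 : p 1 = v := by simp [p, h01]
  have hpl : p (Fin.last _) = w := by simp [p, h0l, h1l]
  obtain ⟨e, he⟩ := exists_equiv_extend_of_card_eq (t := univ.erase x) (s := {0, 1, Fin.last _})
    (f := p) (by simp [card_erase_of_mem, hV])
    (by simp [insert_subset_iff, hp0, hp1, hpl, hxu.symm, hxv.symm, hxw.symm])
    (by
      intro i hi j hj hij
      simp only [coe_insert, coe_singleton, Set.mem_insert_iff, Set.mem_singleton_iff] at hi hj
      rcases hi with rfl | rfl | rfl <;> rcases hj with rfl | rfl | rfl <;>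
        simp_all [eq_comm])
  refine ⟨e.toEmbedding.trans (Function.Embedding.subtype _), ?_, ?_, ?_, ?_⟩
  · simpa [hp0] using he 0 (by simp)
  · simpa [hp1] using he 1 (by simp)
  · simpa [hpl] using he (Fin.last _) (by simp)
  · ext y
    simp only [mem_map, mem_univ, true_and, Function.Embedding.trans_apply,
      Equiv.coe_toEmbedding, Function.Embedding.coe_subtype]
    exact ⟨fun ⟨i, hi⟩ => hi ▸ (e i).2, fun hy => ⟨e.symm ⟨y, hy⟩, by simp⟩⟩

variable {c : Sym2 V → ZMod 3}

theorem starSum_eq_of_forall_eq (hV3 : Fintype.card V % 3 = 2) {u : V} {a : ZMod 3}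
    (h : ∀ y, y ≠ u → c s(u, y) = a) : starSum c u = a := by
  rw [starSum, sum_congr rfl fun y hy => h y (ne_of_mem_erase hy), sum_const,
    card_erase_of_mem (mem_univ u), card_univ, nsmul_eq_mul, ← ZMod.natCast_mod,
    show (Fintype.card V - 1) % 3 = 1 by omega, Nat.cast_one, one_mul]

theorem starSum_eq_of_forall_ne_eq (hV3 : Fintype.card V % 3 = 2) {u b : V} (hb : b ≠ u)
    {a : ZMod 3} (h : ∀ y, y ≠ u → y ≠ b → c s(u, y) = a) : starSum c u = c s(u, b) := by
  have hbu : b ∈ univ.erase u := mem_erase.2 ⟨hb, mem_univ b⟩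
  rw [starSum, ← add_sum_erase _ _ hbu,
    sum_congr rfl fun y hy => h y (ne_of_mem_erase (mem_of_mem_erase hy)) (ne_of_mem_erase hy),
    sum_const, card_erase_of_mem hbu, card_erase_of_mem (mem_univ u), card_univ, nsmul_eq_mul,
    ← ZMod.natCast_mod, show (Fintype.card V - 1 - 1) % 3 = 0 by omega, Nat.cast_zero, zero_mul,
    add_zero]

/-- When `Fintype.card V = k + 4`, this says that the embedding of `doubleStar k` sending
`0, 1, k + 2` to `u, v, w` and missing `x` has colour sum zero (`sum_doubleStar_map`). -/
def IsZeroSumQuad (c : Sym2 V → ZMod 3) (u v w x : V) : Prop :=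
  v ≠ u ∧ w ≠ u ∧ x ≠ u ∧ v ≠ w ∧ x ≠ v ∧ x ≠ w ∧
    c s(v, w) = c s(u, w) + c s(u, x) - starSum c u

theorem exists_missing_colour (hc : ∀ u v w x, ¬IsZeroSumQuad c u v w x)
    (hV : 8 ≤ Fintype.card V) (u : V) : ∃ i, ∀ y, y ≠ u → c s(u, y) ≠ i := by
  by_contra! hall
  obtain ⟨i, -, hi⟩ := exists_lt_card_fiber_of_mul_lt_card_of_maps_to (s := univ.erase u)
    (t := univ) (f := fun y => c s(u, y)) (n := 2) (fun _ _ => mem_univ _)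
    (by simp only [card_univ, ZMod.card, card_erase_of_mem (mem_univ u)]; omega)
  obtain ⟨v, hv, w, hw, x, hx, hvw, hvx, hwx⟩ := two_lt_card.1 hi
  simp only [mem_filter, mem_erase, mem_univ, and_true] at hv hw hx
  set z := c s(v, w) - c s(u, w) + starSum c u
  obtain ⟨y, hyu, hyv, hyw, hy⟩ : ∃ y, y ≠ u ∧ y ≠ v ∧ y ≠ w ∧ c s(u, y) = z := by
    by_cases hz : z = i
    · exact ⟨x, hx.1, hvx.symm, hwx.symm, hx.2.trans hz.symm⟩
    · obtain ⟨y, hyu, hy⟩ := hall z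
      refine ⟨y, hyu, ?_, ?_, hy⟩ <;> rintro rfl
      exacts [hz (hy.symm.trans hv.2), hz (hy.symm.trans hw.2)]
  exact hc u v w y ⟨hv.1, hw.1, hyu, hvw, hyv, hyw, by rw [hy]; ring⟩

theorem eq_of_repeated_colours (hc : ∀ u v w x, ¬IsZeroSumQuad c u v w x) {u y₀ x₀ y₁ x₁ : V}
    (hy₀ : y₀ ≠ u) (hx₀ : x₀ ≠ u) (hy₁ : y₁ ≠ u) (hx₁ : x₁ ≠ u) (hxy₀ : x₀ ≠ y₀)
    (hxy₁ : x₁ ≠ y₁) (h₀ : c s(u, x₀) = c s(u, y₀)) (h₁ : c s(u, x₁) = c s(u, y₁)) :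
    c s(u, y₀) = c s(u, y₁) := by
  by_contra hne
  have hy : y₀ ≠ y₁ := by rintro rfl; exact hne rfl
  have hx₀y₁ : x₀ ≠ y₁ := by rintro rfl; exact hne h₀.symm
  have hx₁y₀ : x₁ ≠ y₀ := by rintro rfl; exact hne h₁
  have e₁ := hc u y₀ y₁ x₀
  have e₂ := hc u y₀ y₁ x₁
  have e₃ := hc u y₁ y₀ x₀
  simp only [IsZeroSumQuad, Sym2.eq_swap (a := y₁), h₀, h₁, not_and] at e₁ e₂ e₃
  -- the three values forbidden for `c s(y₀, y₁)` are pairwise distinct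
  have key : ∀ z s α β : ZMod 3, α ≠ β → z ≠ β + α - s → z ≠ β + β - s → z ≠ α + α - s →
      False := by
    decide
  exact key _ _ _ _ hne (e₁ hy₀ hy₁ hx₀ hy hxy₀ hx₀y₁) (e₂ hy₀ hy₁ hx₁ hy hx₁y₀ hxy₁)
    (e₃ hy₁ hy₀ hx₀ hy.symm hx₀y₁ hxy₀)

theorem false_of_constant_star (hc : ∀ u v w x, ¬IsZeroSumQuad c u v w x)
    (hV : 8 ≤ Fintype.card V) (hV3 : Fintype.card V % 3 = 2) {u : V} {a : ZMod 3}
    (h : ∀ y, y ≠ u → c s(u, y) = a) : False := by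
  have hT := starSum_eq_of_forall_eq hV3 h
  have hua (p : V) (hp : p ≠ u) : c s(p, u) = a := Sym2.eq_swap ▸ h p hp
  have hne_a (v w : V) (hvu : v ≠ u) (hwu : w ≠ u) (hvw : v ≠ w) : c s(v, w) ≠ a := by
    intro hvw'
    obtain ⟨x, hxu, hxv, hxw⟩ := Fintype.exists_ne_of_three_lt_card (by omega) u v w
    exact hc u v w x ⟨hvu, hwu, hxu, hvw, hxv, hxw, by rw [hvw', h w hwu, h x hxu, hT]; ring⟩
  -- away from `u`, the edges at `p` avoid both `a` and a colour missing at `p`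
  have hconst (p : V) (hp : p ≠ u) (y y' : V) (hyu : y ≠ u) (hyp : y ≠ p) (hyu' : y' ≠ u)
      (hyp' : y' ≠ p) : c s(p, y) = c s(p, y') := by
    obtain ⟨i, hi⟩ := exists_missing_colour hc hV p
    have key : ∀ z z' i a : ZMod 3, i ≠ a → z ≠ i → z' ≠ i → z ≠ a → z' ≠ a → z = z' := by
      decide
    exact key _ _ i a (fun hia => hi u hp.symm ((hua p hp).trans hia.symm))
      (hi y hyp) (hi y' hyp') (hne_a p y hp hyu hyp.symm) (hne_a p y' hp hyu' hyp'.symm)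
  obtain ⟨u', hu'⟩ := Fintype.exists_ne_of_one_lt_card (by omega) u
  obtain ⟨v, hvu, hvu', -⟩ := Fintype.exists_ne_of_three_lt_card (by omega) u u' u
  obtain ⟨w, hwu, hwu', hwv⟩ := Fintype.exists_ne_of_three_lt_card (by omega) u u' v
  have hT' : starSum c u' = a := by
    rw [starSum_eq_of_forall_ne_eq hV3 hu'.symm (a := c s(u', v)) fun y hyu' hyu =>
      hconst u' hu' y v hyu hyu' hvu hvu', hua u' hu']
  have hvw : c s(v, w) = c s(u', w) := by
    rw [hconst v hvu w u' hwu hwv hu' hvu'.symm, Sym2.eq_swap,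
      hconst u' hu' v w hvu hvu' hwu hwu']
  exact hc u' v w u ⟨hvu', hwu', hu'.symm, hwv.symm, hvu.symm, hwu.symm,
    by rw [hvw, hua u' hu', hT']; ring⟩

theorem false_of_unique_colour (hc : ∀ u v w x, ¬IsZeroSumQuad c u v w x)
    (hV : 8 ≤ Fintype.card V) (hV3 : Fintype.card V % 3 = 2) {u b : V} {a : ZMod 3}
    (hbu : b ≠ u) (hb : c s(u, b) ≠ a) (h : ∀ y, y ≠ u → y ≠ b → c s(u, y) = a) : False := by
  have hT := starSum_eq_of_forall_ne_eq hV3 hbu h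
  refine false_of_constant_star hc hV hV3 (u := b) (a := c s(u, b)) fun y hyb => ?_
  by_cases hyu : y = u
  · rw [hyu, Sym2.eq_swap]
  obtain ⟨q, hqu, hqb, hqy⟩ := Fintype.exists_ne_of_three_lt_card (by omega) u b y
  have e₁ := hc u y b q
  have e₂ := hc u b y q
  simp only [IsZeroSumQuad, Sym2.eq_swap (a := y) (b := b), h q hqu hqb, h y hyu hyb, hT,
    not_and] at e₁ e₂
  have key : ∀ z a β : ZMod 3, β ≠ a → z ≠ β + a - β → z ≠ a + a - β → z = β := by decide
  exact key _ _ _ hb (e₁ hyu hbu hqu hyb hqy hqb) (e₂ hbu hyu hqu (Ne.symm hyb) hqb hqy)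

theorem exists_isZeroSumQuad (hV : 8 ≤ Fintype.card V) (hV3 : Fintype.card V % 3 = 2)
    (c : Sym2 V → ZMod 3) : ∃ u v w x, IsZeroSumQuad c u v w x := by
  by_contra! hc
  obtain ⟨u⟩ : Nonempty V := Fintype.card_pos_iff.mp (by omega)
  obtain ⟨i, hi⟩ := exists_missing_colour hc hV u
  obtain ⟨y₀, hy₀⟩ := Fintype.exists_ne_of_one_lt_card (by omega) u
  obtain ⟨y₁, hy₁, hne⟩ : ∃ y₁, y₁ ≠ u ∧ c s(u, y₁) ≠ c s(u, y₀) := by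
    by_contra! h
    exact false_of_constant_star hc hV hV3 h
  have htwo (y : V) (hy : y ≠ u) : c s(u, y) = c s(u, y₀) ∨ c s(u, y) = c s(u, y₁) := by
    have key : ∀ z i α β : ZMod 3, z ≠ i → α ≠ i → β ≠ i → β ≠ α → z = α ∨ z = β := by decide
    exact key _ i _ _ (hi y hy) (hi y₀ hy₀) (hi y₁ hy₁) hne
  by_cases h₀ : ∃ x₀, x₀ ≠ u ∧ x₀ ≠ y₀ ∧ c s(u, x₀) = c s(u, y₀)
  · obtain ⟨x₀, hx₀, hxy₀, hc₀⟩ := h₀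
    by_cases h₁ : ∃ x₁, x₁ ≠ u ∧ x₁ ≠ y₁ ∧ c s(u, x₁) = c s(u, y₁)
    · obtain ⟨x₁, hx₁, hxy₁, hc₁⟩ := h₁
      exact hne (eq_of_repeated_colours hc hy₀ hx₀ hy₁ hx₁ hxy₀ hxy₁ hc₀ hc₁).symm
    · push Not at h₁
      exact false_of_unique_colour hc hV hV3 hy₁ hne
        fun y hyu hyb => (htwo y hyu).resolve_right (h₁ y hyu hyb)
  · push Not at h₀
    exact false_of_unique_colour hc hV hV3 hy₀ (Ne.symm hne)
      fun y hyu hyb => (htwo y hyu).resolve_left (h₀ y hyu hyb)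

theorem exists_sum_doubleStar_eq_zero_of_card_eq {k : ℕ} (hk : 4 ≤ k) (hk3 : k % 3 = 1)
    (hV : Fintype.card V = k + 4) (c : Sym2 V → ZMod 3) :
    ∃ g : Fin (k + 3) ↪ V, ∑ e ∈ (doubleStar k).edgeFinset, c (e.map g) = 0 := by
  obtain ⟨u, v, w, x, hvu, hwu, hxu, hvw, hxv, hxw, hquad⟩ :=
    exists_isZeroSumQuad (by omega) (by omega) c
  obtain ⟨g, rfl, rfl, rfl, hg⟩ := exists_embedding_doubleStar hV hvu hwu hxu hvw hxv hxw
  refine ⟨g, ?_⟩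
  rw [sum_doubleStar_map c g hg, hquad]
  ring

end Colouring

theorem exists_sum_doubleStar_eq_zero {V : Type*} [Fintype V] {k : ℕ} (hk : 4 ≤ k)
    (hk3 : k % 3 = 1) (hV : k + 4 ≤ Fintype.card V) (c : Sym2 V → ZMod 3) :
    ∃ g : Fin (k + 3) ↪ V, ∑ e ∈ (doubleStar k).edgeFinset, c (e.map g) = 0 := by
  obtain ⟨ι⟩ := Function.Embedding.nonempty_of_card_le
    (by rwa [Fintype.card_fin] : Fintype.card (Fin (k + 4)) ≤ Fintype.card V)
  obtain ⟨g, hg⟩ := exists_sum_doubleStar_eq_zero_of_card_eq hk hk3 (Fintype.card_fin _)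
    fun e => c (e.map ι)
  exact ⟨g.trans ι, by simpa [Sym2.map_map] using hg⟩

theorem stmt_17 (k1 : ℕ) (hk : 2 ≤ k1) (hn : (k1 + 3) % 3 = 1) :
    IsLeast {N : ℕ | ∀ m : ℕ, N ≤ m → ∀ c : Sym2 (Fin m) → ZMod 3,
      ∃ f : Fin (k1 + 3) ↪ Fin m,
        ∑ e ∈ (doubleStar k1).edgeFinset, c (e.map f) = 0} ((k1 + 3) + 1) := by
  refine ⟨fun m hm c => exists_sum_doubleStar_eq_zero (by omega) (by omega)
    (by rw [Fintype.card_fin]; omega) c, fun N hN => ?_⟩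
  by_contra! hN'
  obtain ⟨c, hc⟩ := exists_forall_sum_doubleStar_ne_zero (k := k1) (by omega)
  obtain ⟨f, hf⟩ := hN (k1 + 3) (by omega) c
  exact hc f hf
end
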